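/- arXiv:0707.3404 — 4 statements merged into one kernel-verified Lean document; each statement's English description precedes it below -/
import Mathlib

section
/- Let ξ₀, ξ₁, …, ξₙ span a fan. If k and l are indices with 0 ≤ k, k+1 < l ≤ n and det(ξ_k, ξ_l) = 1 (i.e. ξ_k and ξ_l form a base of the lattice ℤ²), then there exists an index i with k < i < l such that ξ_i = ξ_k + ξ_l. -/
/-!
Since det(ξ_k, ξ_l) = 1, the vectors ξ_k, ξ_l form a lattice basis, and the coordinates of
ξ_k, …, ξ_l in this basis again span a fan (determinants are preserved and the coordinates
are nonnegative because the ξ_i turn monotonically). So it suffices to find (1,1) in a fan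
with at least one interior vector: take the first ξ_m on or above the diagonal; the
determinant 1 with its predecessor, which lies strictly below the diagonal, forces ξ_m = (1,1).
-/

/-- det(ξ,ν) = ξ₁ν₂ − ξ₂ν₁ for ξ, ν ∈ ℤ². -/
def det2 (ξ ν : ℤ × ℤ) : ℤ := ξ.1 * ν.2 - ξ.2 * ν.1

/-- A sequence ξ₀, …, ξₙ of vectors in ℤ² with nonnegative coordinates spans a fan if
ξ₀ = (1,0), ξₙ = (0,1) and det(ξ_{i−1}, ξ_i) = 1 for all 1 ≤ i ≤ n. -/
def SpansFan (n : ℕ) (ξ : ℕ → ℤ × ℤ) : Prop :=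
  (∀ i ≤ n, 0 ≤ (ξ i).1 ∧ 0 ≤ (ξ i).2) ∧
  ξ 0 = (1, 0) ∧ ξ n = (0, 1) ∧
  ∀ i, 1 ≤ i → i ≤ n → det2 (ξ (i - 1)) (ξ i) = 1

/-- When `det2 p q = 1`, the coordinates of `x` in the basis `p, q` (by `det2_smul_eq`). -/
def basisCoords (p q x : ℤ × ℤ) : ℤ × ℤ := (det2 x q, det2 p x)

lemma det2_self (v : ℤ × ℤ) : det2 v v = 0 := by
  unfold det2; ring

lemma det2_basisCoords (p q x y : ℤ × ℤ) :
    det2 (basisCoords p q x) (basisCoords p q y) = det2 p q * det2 x y := by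
  unfold basisCoords det2; ring

lemma det2_smul_eq (p q x : ℤ × ℤ) : det2 p q • x = det2 x q • p + det2 p x • q := by
  ext <;> simp only [det2, Prod.smul_fst, Prod.smul_snd, Prod.fst_add, Prod.snd_add,
    smul_eq_mul] <;> ring

lemma eq_add_of_basisCoords_eq {p q x : ℤ × ℤ} (hpq : det2 p q = 1)
    (hx : basisCoords p q x = (1, 1)) : x = p + q := by
  simp only [basisCoords, Prod.mk.injEq] at hx
  simpa [hpq, hx.1, hx.2] using det2_smul_eq p q x

lemma det2_swap (u v : ℤ × ℤ) : det2 v u = -det2 u v := by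
  unfold det2; ring

lemma det2_pos_of_det2_pos_of_det2_eq_one {u v w : ℤ × ℤ} (hu : 0 ≤ u) (hv : 0 ≤ v)
    (hw : 0 ≤ w) (huv : 0 < det2 u v) (hvw : det2 v w = 1) : 0 < det2 u w := by
  obtain ⟨hu₁, hu₂⟩ := hu
  obtain ⟨hv₁, hv₂⟩ := hv
  obtain ⟨hw₁, hw₂⟩ := hw
  simp only [Prod.fst_zero, Prod.snd_zero] at *
  by_contra! huw
  -- `u = det2 u w • v - det2 u v • w` has nonpositive coordinates, hence vanishes.
  have hcramer := det2_smul_eq v w u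
  rw [hvw, one_smul, det2_swap u v, Prod.ext_iff] at hcramer
  simp only [Prod.fst_add, Prod.snd_add, Prod.smul_fst, Prod.smul_snd, smul_eq_mul] at hcramer
  have hu₁0 : u.1 = 0 := by
    nlinarith [mul_nonpos_of_nonpos_of_nonneg huw hv₁, mul_nonneg huv.le hw₁]
  have hu₂0 : u.2 = 0 := by
    nlinarith [mul_nonpos_of_nonpos_of_nonneg huw hv₂, mul_nonneg huv.le hw₂]
  simp [det2, hu₁0, hu₂0] at huv

namespace SpansFan

variable {n : ℕ} {ξ : ℕ → ℤ × ℤ}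

lemma nonneg (hfan : SpansFan n ξ) {i : ℕ} (hi : i ≤ n) : 0 ≤ ξ i := hfan.1 i hi

lemma det2_succ (hfan : SpansFan n ξ) {i : ℕ} (hi : i < n) : det2 (ξ i) (ξ (i + 1)) = 1 :=
  hfan.2.2.2 (i + 1) (by omega) hi

lemma det2_pos (hfan : SpansFan n ξ) {i j : ℕ} (hij : i < j) (hjn : j ≤ n) :
    0 < det2 (ξ i) (ξ j) := by
  induction j, hij using Nat.le_induction with
  | base => rw [hfan.det2_succ hjn]; exact one_pos
  | succ j hij ih =>
    exact det2_pos_of_det2_pos_of_det2_eq_one (hfan.nonneg (by omega)) (hfan.nonneg (by omega))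
      (hfan.nonneg hjn) (ih (by omega)) (hfan.det2_succ hjn)

lemma det2_nonneg (hfan : SpansFan n ξ) {i j : ℕ} (hij : i ≤ j) (hjn : j ≤ n) :
    0 ≤ det2 (ξ i) (ξ j) := by
  rcases hij.eq_or_lt with rfl | hij
  · rw [det2_self]
  · exact (hfan.det2_pos hij hjn).le

theorem map_basisCoords (hfan : SpansFan n ξ) {k l : ℕ} (hkl : k ≤ l) (hln : l ≤ n)
    (hdet : det2 (ξ k) (ξ l) = 1) :
    SpansFan (l - k) (fun t => basisCoords (ξ k) (ξ l) (ξ (k + t))) := by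
  refine ⟨fun t ht => ⟨hfan.det2_nonneg (by omega) hln, hfan.det2_nonneg (by omega) (by omega)⟩,
    ?_, ?_, fun t ht₁ ht₂ => ?_⟩
  · simp [basisCoords, hdet, det2_self]
  · simp [basisCoords, Nat.add_sub_cancel' hkl, hdet, det2_self]
  · obtain ⟨s, rfl⟩ := Nat.exists_eq_add_of_le' ht₁
    rw [det2_basisCoords, hdet, one_mul, Nat.add_sub_cancel, ← add_assoc]
    exact hfan.det2_succ (by omega)

theorem exists_eq_one_one (hfan : SpansFan n ξ) (hn : 2 ≤ n) :
    ∃ i, 0 < i ∧ i < n ∧ ξ i = (1, 1) := by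
  obtain ⟨-, hξ0, hξn, -⟩ := id hfan
  have hsnd : ∀ i, 0 < i → i ≤ n → 0 < (ξ i).2 := fun i hi hin => by
    simpa [det2, hξ0] using hfan.det2_pos hi hin
  have hfst : ∀ i < n, 0 < (ξ i).1 := fun i hi => by
    simpa [det2, hξn] using hfan.det2_pos hi le_rfl
  have hex : ∃ m, (ξ m).1 ≤ (ξ m).2 := ⟨n, by simp [hξn]⟩
  obtain ⟨m, habove, hbelow⟩ : ∃ m, (ξ m).1 ≤ (ξ m).2 ∧ ∀ j < m, (ξ j).2 < (ξ j).1 :=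
    ⟨Nat.find hex, Nat.find_spec hex, fun j hj => not_le.1 (Nat.find_min hex hj)⟩
  have hm0 : 0 < m := Nat.pos_of_ne_zero fun h => by simp [h, hξ0] at habove
  have hmn : m ≤ n := not_lt.1 fun h => by simpa [hξn] using hbelow n h
  have hprev := hbelow (m - 1) (by omega)
  have hstep := hfan.det2_succ (i := m - 1) (by omega)
  rw [Nat.sub_add_cancel hm0] at hstep
  have hmn' : m < n := by
    refine hmn.lt_of_ne fun h => ?_
    subst h
    simp only [det2, hξn] at hstep
    have := hsnd (m - 1) (by omega) (by omega)
    omega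
  unfold det2 at hstep
  have hprev_snd : 0 ≤ (ξ (m - 1)).2 := (hfan.nonneg (by omega)).2
  have hm_fst := hfst m hmn'
  have hm_snd := hsnd m hm0 hmn
  -- `1 = det2 ξ_{m-1} ξ_m ≥ ((ξ_{m-1}).1 - (ξ_{m-1}).2) * (ξ m).2 ≥ (ξ m).2`
  have hm_snd_le : (ξ m).2 ≤ 1 := by
    nlinarith [mul_nonneg (by omega : 0 ≤ (ξ (m - 1)).1 - (ξ (m - 1)).2 - 1) hm_snd.le,
      mul_nonneg hprev_snd (sub_nonneg.2 habove)]
  exact ⟨m, hm0, hmn', Prod.ext (by dsimp only; omega) (by dsimp only; omega)⟩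

end SpansFan

/-- If ξ₀, …, ξₙ span a fan, k + 1 < l ≤ n and det(ξ_k, ξ_l) = 1, then some ξ_i with
k < i < l equals ξ_k + ξ_l. -/
theorem fan_sum_of_det_one (n : ℕ) (ξ : ℕ → ℤ × ℤ) (hfan : SpansFan n ξ)
    (k l : ℕ) (hkl : k + 1 < l) (hln : l ≤ n) (hdet : det2 (ξ k) (ξ l) = 1) :
    ∃ i, k < i ∧ i < l ∧ ξ i = ξ k + ξ l := by
  obtain ⟨t, ht0, htl, ht⟩ :=
    (hfan.map_basisCoords (by omega) hln hdet).exists_eq_one_one (by omega)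
  exact ⟨k + t, by omega, by omega, eq_add_of_basisCoords_eq hdet ht⟩
end

section
/- Let ξ₀, ξ₁, …, ξₙ span a fan, with n ≥ 2. Then there exists an index i with 0 < i < n such that ξ_i = ξ_{i−1} + ξ_{i+1}. -/
/-!
Let `s (x, y) = x + y` be the coordinate sum. Two consecutive determinants equal to one give
`ξ (i-1) + ξ (i+1) = c • ξ i` with `c = det2 (ξ (i-1)) (ξ (i+1))`, and `c > 0` by nonnegativity.
If `c = 1` never happens, then `c ≥ 2` everywhere, so `i ↦ s (ξ i)` is discretely convex. Since
`ξ 1 = (x, 1)` with `x ≥ 1` (for `x = 0` the next determinant would force `(ξ 2).1 = -1`),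
`s (ξ 0) < s (ξ 1)`, and convexity makes `s ∘ ξ` strictly increasing all along the fan,
contradicting `s (ξ 0) = s (ξ n) = 1`.
-/

theorem strictMonoOn_Iic_of_add_self_le {α : Type*} [AddCommGroup α] [LinearOrder α]
    [IsOrderedAddMonoid α] {f : ℕ → α} {n : ℕ}
    (hconv : ∀ i, 0 < i → i < n → f i + f i ≤ f (i - 1) + f (i + 1)) (h01 : f 0 < f 1) :
    StrictMonoOn f (Set.Iic n) := by
  refine strictMonoOn_Iic_of_lt_succ fun m hm => ?_
  rw [Order.succ_eq_add_one]
  induction m with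
  | zero => exact h01
  | succ k ih =>
    have hk := hconv (k + 1) k.succ_pos hm
    rw [Nat.add_sub_cancel] at hk
    exact lt_of_add_lt_add_left (hk.trans_lt (add_lt_add_left (ih (by omega)) _))

theorem add_eq_det2_smul {a b c : ℤ × ℤ} (hab : det2 a b = 1) (hbc : det2 b c = 1) :
    a + c = det2 a c • b := by
  simp only [det2] at *
  ext
  · simp only [Prod.fst_add, Prod.smul_fst, smul_eq_mul]
    linear_combination (-a.1) * hbc - c.1 * hab
  · simp only [Prod.snd_add, Prod.smul_snd, smul_eq_mul]
    linear_combination (-a.2) * hbc - c.2 * hab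

def coordSum (v : ℤ × ℤ) : ℤ := v.1 + v.2

theorem coordSum_add (v w : ℤ × ℤ) : coordSum (v + w) = coordSum v + coordSum w := by
  simp only [coordSum, Prod.fst_add, Prod.snd_add]
  ring

theorem coordSum_smul (c : ℤ) (v : ℤ × ℤ) : coordSum (c • v) = c * coordSum v := by
  simp only [coordSum, Prod.smul_fst, Prod.smul_snd, smul_eq_mul]
  ring

theorem one_le_coordSum_of_det2_eq_one {a b : ℤ × ℤ} (hb : 0 ≤ b.1 ∧ 0 ≤ b.2)
    (h : det2 a b = 1) : 1 ≤ coordSum b := by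
  by_contra! hlt
  obtain ⟨hx, hy⟩ : b.1 = 0 ∧ b.2 = 0 := by unfold coordSum at hlt; omega
  simp [det2, hx, hy] at h

namespace SpansFan

variable {n : ℕ} {ξ : ℕ → ℤ × ℤ}

theorem one_le_coordSum (hfan : SpansFan n ξ) {i : ℕ} (hi : 0 < i) (hin : i ≤ n) :
    1 ≤ coordSum (ξ i) :=
  one_le_coordSum_of_det2_eq_one (hfan.1 i hin) (hfan.2.2.2 i hi hin)

theorem add_eq_det2_smul (hfan : SpansFan n ξ) {i : ℕ} (hi : 0 < i) (hin : i < n) :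
    ξ (i - 1) + ξ (i + 1) = det2 (ξ (i - 1)) (ξ (i + 1)) • ξ i := by
  refine _root_.add_eq_det2_smul (hfan.2.2.2 i hi hin.le) ?_
  simpa using hfan.2.2.2 (i + 1) (by omega) hin

theorem coordSum_add_self_le (hfan : SpansFan n ξ) {i : ℕ} (hi : 0 < i) (hin : i < n)
    (hne : ξ i ≠ ξ (i - 1) + ξ (i + 1)) :
    coordSum (ξ i) + coordSum (ξ i) ≤ coordSum (ξ (i - 1)) + coordSum (ξ (i + 1)) := by
  have hsum := hfan.add_eq_det2_smul hi hin
  set c := det2 (ξ (i - 1)) (ξ (i + 1))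
  have hc : c ≠ 1 := fun hc => hne (by rw [hsum, hc, one_smul])
  have hs := congrArg coordSum hsum
  rw [coordSum_add, coordSum_smul] at hs
  obtain ⟨hx, hy⟩ := hfan.1 (i - 1) (by omega)
  have hprev : 0 ≤ coordSum (ξ (i - 1)) := add_nonneg hx hy
  have hcur := hfan.one_le_coordSum hi hin.le
  have hnext := hfan.one_le_coordSum i.succ_pos hin
  have hc2 : 2 ≤ c := by
    have : 0 < c := by nlinarith
    omega
  nlinarith

theorem coordSum_zero_lt_one (hfan : SpansFan n ξ) (hn : 2 ≤ n) :
    coordSum (ξ 0) < coordSum (ξ 1) := by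
  obtain ⟨hpos, h0, -, hdet⟩ := hfan
  have h1 := hdet 1 le_rfl (by omega)
  simp only [det2, h0, Nat.sub_self, one_mul, zero_mul, sub_zero] at h1
  suffices 0 < (ξ 1).1 by simp only [coordSum, h0, h1]; omega
  refine lt_of_le_of_ne (hpos 1 (by omega)).1 fun hx => ?_
  have h2 := hdet 2 (by omega) hn
  rw [Nat.add_one_sub_one, det2, ← hx, h1] at h2
  have := (hpos 2 hn).1
  omega

end SpansFan

/-- If ξ₀, …, ξₙ span a fan and n ≥ 2, then there is an index 0 < i < n with
ξ_i = ξ_{i−1} + ξ_{i+1}. -/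
theorem fan_has_sum_vector (n : ℕ) (ξ : ℕ → ℤ × ℤ) (hfan : SpansFan n ξ) (hn : 2 ≤ n) :
    ∃ i, 0 < i ∧ i < n ∧ ξ i = ξ (i - 1) + ξ (i + 1) := by
  by_contra! hno
  have hmono : StrictMonoOn (fun i => coordSum (ξ i)) (Set.Iic n) :=
    strictMonoOn_Iic_of_add_self_le (fun i hi hin => hfan.coordSum_add_self_le hi hin (hno i hi hin))
      (hfan.coordSum_zero_lt_one hn)
  have hlt := hmono (Set.mem_Iic.2 n.zero_le) (Set.mem_Iic.2 le_rfl) (by omega)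
  simp [coordSum, hfan.2.1, hfan.2.2.1] at hlt
end

section
/- Let f = Σ a_{ij}x^i y^j ∈ ℂ[[x,y]] be nonzero and let ξ=(ξ₁,ξ₂), ν=(ν₁,ν₂) ∈ ℕ² with det(ξ,ν)=1. The linear map T : (i,j) ↦ (iξ₁+jξ₂, iν₁+jν₂) is injective on ℕ², so F = Σ_{(i,j)∈supp f} a_{ij} u^{iξ₁+jξ₂} v^{iν₁+jν₂} is a well-defined element of ℂ[[u,v]] whose support equals T(supp f). Moreover there is a unique f̃ ∈ ℂ[[u,v]] with F = u^{l(f,ξ)} v^{l(f,ν)} · f̃, and the order of f̃ (the minimum of p+q over (p,q) ∈ supp f̃) equals l(f,ξ+ν) − l(f,ξ) − l(f,ν). -/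
/-!
Since det(ξ, ν) ≠ 0 the exponent map T is injective, so F is the series whose coefficient at
T p is a_p and which vanishes off the image of T. Because ⟨T p, w⟩ = ⟨p, w₁ξ + w₂ν⟩, the
weighted orders of F for the weights (1,0), (0,1), (1,1) are l(f, ξ), l(f, ν) and l(f, ξ + ν).
The first two say that u^{l(f,ξ)} v^{l(f,ν)} divides F, with a unique quotient since monomials
are non-zero-divisors, and dividing by a monomial lowers the order by its degree.
-/

noncomputable section

/-- The ring ℂ[[x,y]] of formal power series in two variables over ℂ. -/
abbrev PS := MvPowerSeries (Fin 2) ℂ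

/-- The exponent pair (i,j) as a multi-index for `MvPowerSeries (Fin 2) ℂ`. -/
def idx (p : ℕ × ℕ) : Fin 2 →₀ ℕ := Finsupp.single 0 p.1 + Finsupp.single 1 p.2

/-- The coefficient a_{ij} of x^i y^j in f. -/
def coef (f : PS) (p : ℕ × ℕ) : ℂ := MvPowerSeries.coeff (idx p) f

/-- The support of f: the set of (i,j) ∈ ℕ² with a_{ij} ≠ 0. -/
def supp (f : PS) : Set (ℕ × ℕ) := {p | coef f p ≠ 0}

/-- l(f,w) = min_{(i,j) ∈ supp f} (i·w₁ + j·w₂). -/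
def lFun (f : PS) (w : ℕ × ℕ) : ℕ := sInf ((fun p : ℕ × ℕ => p.1 * w.1 + p.2 * w.2) '' supp f)

/-- The order of a power series: the minimum of p + q over (p,q) in the support. -/
def ordPS (f : PS) : ℕ := sInf ((fun p : ℕ × ℕ => p.1 + p.2) '' supp f)

lemma Function.eq_extend_zero_iff {α β M : Type*} [Zero M] {T : α → β} (hT : T.Injective)
    {c : β → M} {g : α → M} :
    c = extend T g 0 ↔ support c = T '' support g ∧ ∀ a, c (T a) = g a := by
  refine ⟨?_, fun ⟨hsupp, hcomp⟩ => funext fun b => ?_⟩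
  · rintro rfl
    exact ⟨support_extend_zero hT, hT.extend_apply g 0⟩
  · by_cases hb : ∃ a, T a = b
    · obtain ⟨a, rfl⟩ := hb
      rw [hT.extend_apply, hcomp]
    · rw [extend_apply' _ _ _ hb, Pi.zero_apply, ← notMem_support, hsupp]
      rintro ⟨a, -, rfl⟩
      exact hb ⟨a, rfl⟩

lemma Nat.sInf_image_add_sub {α : Type*} (φ : α → ℕ) (S : Set α) (c : ℕ) :
    sInf ((fun x => φ x + c) '' S) - c = sInf (φ '' S) := by
  rcases S.eq_empty_or_nonempty with rfl | hS
  · simp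
  · have hmono : Monotone (· + c) := fun _ _ h => Nat.add_le_add_right h c
    rw [← Set.image_image (· + c) φ, ← hmono.map_csInf (hS.image φ), Nat.add_sub_cancel]

lemma MvPowerSeries.monomial_one_dvd_of_le {σ R : Type*} [Semiring R] {n : σ →₀ ℕ}
    {φ : MvPowerSeries σ R} (h : ∀ m, coeff m φ ≠ 0 → n ≤ m) : monomial n 1 ∣ φ := by
  refine ⟨show MvPowerSeries σ R from fun m => coeff (m + n) φ, ext fun m => ?_⟩
  rw [coeff_monomial_mul]
  split_ifs with hm
  · rw [one_mul]
    exact congrArg (coeff · φ) (tsub_add_cancel_of_le hm).symm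
  · exact not_not.1 (mt (h m) hm)

@[simp] lemma idx_apply_zero (p : ℕ × ℕ) : idx p 0 = p.1 := by simp [idx]

@[simp] lemma idx_apply_one (p : ℕ × ℕ) : idx p 1 = p.2 := by simp [idx]

lemma idx_eval (m : Fin 2 →₀ ℕ) : idx (m 0, m 1) = m := by
  ext i; fin_cases i <;> simp

lemma idx_sub (p q : ℕ × ℕ) : idx (p - q) = idx p - idx q := by
  ext i; fin_cases i <;> simp

lemma idx_le_idx {p q : ℕ × ℕ} : idx p ≤ idx q ↔ p ≤ q := by
  simp [Finsupp.le_def, Fin.forall_fin_two, Prod.le_def]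

lemma coef_bijective : Function.Bijective coef := by
  refine ⟨fun g h hgh => MvPowerSeries.ext fun m => ?_,
    fun c => ⟨fun m => c (m 0, m 1), ?_⟩⟩
  · simpa [coef, idx_eval] using congrFun hgh (m 0, m 1)
  · funext p
    show c (idx p 0, idx p 1) = c p
    simp

lemma mem_supp {f : PS} {p : ℕ × ℕ} : p ∈ supp f ↔ coef f p ≠ 0 := Iff.rfl

lemma lFun_le {f : PS} {p : ℕ × ℕ} (hp : p ∈ supp f) (w : ℕ × ℕ) :
    lFun f w ≤ p.1 * w.1 + p.2 * w.2 :=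
  Nat.sInf_le ⟨p, hp, rfl⟩

lemma ordPS_eq_lFun (f : PS) : ordPS f = lFun f (1, 1) := by
  simp [ordPS, lFun]

def monomialExp (ξ ν : ℕ × ℕ) (p : ℕ × ℕ) : ℕ × ℕ :=
  (p.1 * ξ.1 + p.2 * ξ.2, p.1 * ν.1 + p.2 * ν.2)

lemma monomialExp_injective {ξ ν : ℕ × ℕ}
    (hdet : (ξ.1 : ℤ) * ν.2 - (ξ.2 : ℤ) * ν.1 ≠ 0) :
    Function.Injective (monomialExp ξ ν) := by
  intro p q h
  obtain ⟨h₁, h₂⟩ := Prod.mk.inj h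
  zify at h₁ h₂
  -- Cramer's rule
  have e₁ : ((p.1 : ℤ) - q.1) * ((ξ.1 : ℤ) * ν.2 - (ξ.2 : ℤ) * ν.1) = 0 := by
    linear_combination (ν.2 : ℤ) * h₁ - (ξ.2 : ℤ) * h₂
  have e₂ : ((p.2 : ℤ) - q.2) * ((ξ.1 : ℤ) * ν.2 - (ξ.2 : ℤ) * ν.1) = 0 := by
    linear_combination (ξ.1 : ℤ) * h₂ - (ν.1 : ℤ) * h₁
  refine Prod.ext ?_ ?_
  · exact_mod_cast sub_eq_zero.1 ((mul_eq_zero.1 e₁).resolve_right hdet)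
  · exact_mod_cast sub_eq_zero.1 ((mul_eq_zero.1 e₂).resolve_right hdet)

lemma lFun_eq_of_supp_eq_image {F f : PS} {ξ ν : ℕ × ℕ}
    (hF : supp F = monomialExp ξ ν '' supp f) (w : ℕ × ℕ) :
    lFun F w = lFun f (w.1 • ξ + w.2 • ν) := by
  rw [lFun, lFun, hF, Set.image_image]
  refine congrArg sInf (Set.image_congr' fun p => ?_)
  simp only [monomialExp, Prod.fst_add, Prod.snd_add, Prod.smul_fst, Prod.smul_snd, smul_eq_mul]
  ring

lemma X_pow_mul_X_pow (a b : ℕ) :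
    (MvPowerSeries.X 0 : PS) ^ a * MvPowerSeries.X 1 ^ b =
      MvPowerSeries.monomial (idx (a, b)) 1 := by
  rw [MvPowerSeries.X_pow_eq, MvPowerSeries.X_pow_eq, MvPowerSeries.monomial_mul_monomial, one_mul]
  rfl

lemma coef_X_pow_mul_X_pow_mul (a b : ℕ) (g : PS) (q : ℕ × ℕ) :
    coef (MvPowerSeries.X 0 ^ a * MvPowerSeries.X 1 ^ b * g) q =
      if (a, b) ≤ q then coef g (q - (a, b)) else 0 := by
  simp only [coef, X_pow_mul_X_pow, MvPowerSeries.coeff_monomial_mul, idx_le_idx, one_mul, idx_sub]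

lemma supp_X_pow_mul_X_pow_mul (a b : ℕ) (g : PS) :
    supp (MvPowerSeries.X 0 ^ a * MvPowerSeries.X 1 ^ b * g) = (· + (a, b)) '' supp g := by
  ext q
  simp only [mem_supp, coef_X_pow_mul_X_pow_mul, Set.mem_image]
  constructor
  · intro hq
    split_ifs at hq with hab
    · exact ⟨q - (a, b), hq, tsub_add_cancel_of_le hab⟩
    · exact absurd rfl hq
  · rintro ⟨r, hr, rfl⟩
    simpa using hr

lemma lFun_eq_of_eq_X_pow_mul {F g : PS} {a b : ℕ}
    (h : F = MvPowerSeries.X 0 ^ a * MvPowerSeries.X 1 ^ b * g) (w : ℕ × ℕ) :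
    lFun g w = lFun F w - (a * w.1 + b * w.2) := by
  rw [lFun, lFun, h, supp_X_pow_mul_X_pow_mul, Set.image_image,
    ← Nat.sInf_image_add_sub _ _ (a * w.1 + b * w.2)]
  congr 2
  refine Set.image_congr' fun q => ?_
  simp only [Prod.fst_add, Prod.snd_add]
  ring

lemma X_pow_lFun_mul_X_pow_lFun_dvd (g : PS) :
    MvPowerSeries.X 0 ^ lFun g (1, 0) * MvPowerSeries.X 1 ^ lFun g (0, 1) ∣ g := by
  rw [X_pow_mul_X_pow]
  refine MvPowerSeries.monomial_one_dvd_of_le fun m hm => ?_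
  rw [← idx_eval m] at hm ⊢
  rw [idx_le_idx]
  exact ⟨by simpa using lFun_le hm (1, 0), by simpa using lFun_le hm (0, 1)⟩

lemma existsUnique_eq_X_pow_lFun_mul (g : PS) :
    ∃! ft : PS,
      g = MvPowerSeries.X 0 ^ lFun g (1, 0) * MvPowerSeries.X 1 ^ lFun g (0, 1) * ft := by
  obtain ⟨ft, hft⟩ := X_pow_lFun_mul_X_pow_lFun_dvd g
  have hX (i : Fin 2) : (MvPowerSeries.X i : PS) ≠ 0 :=
    nonZeroDivisors.ne_zero MvPowerSeries.X_mem_nonzeroDivisors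
  have hmonomial := mul_ne_zero (pow_ne_zero (lFun g (1, 0)) (hX 0)) (pow_ne_zero (lFun g (0, 1)) (hX 1))
  exact ⟨ft, hft, fun ft' hft' => mul_left_cancel₀ hmonomial (hft'.symm.trans hft)⟩

theorem proper_preimage_order_general (f : PS) (ξ ν : ℕ × ℕ)
    (hdet : (ξ.1 : ℤ) * ν.2 - (ξ.2 : ℤ) * ν.1 = 1) :
    Function.Injective
      (fun p : ℕ × ℕ => (p.1 * ξ.1 + p.2 * ξ.2, p.1 * ν.1 + p.2 * ν.2)) ∧
    (∃! F : PS,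
      supp F = (fun p : ℕ × ℕ => (p.1 * ξ.1 + p.2 * ξ.2, p.1 * ν.1 + p.2 * ν.2)) '' supp f ∧
      ∀ p : ℕ × ℕ, coef F (p.1 * ξ.1 + p.2 * ξ.2, p.1 * ν.1 + p.2 * ν.2) = coef f p) ∧
    ∀ F : PS,
      (supp F = (fun p : ℕ × ℕ => (p.1 * ξ.1 + p.2 * ξ.2, p.1 * ν.1 + p.2 * ν.2)) '' supp f ∧
       ∀ p : ℕ × ℕ, coef F (p.1 * ξ.1 + p.2 * ξ.2, p.1 * ν.1 + p.2 * ν.2) = coef f p) →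
      (∃! ft : PS,
        F = MvPowerSeries.X 0 ^ lFun f ξ * MvPowerSeries.X 1 ^ lFun f ν * ft) ∧
      ∀ ft : PS,
        F = MvPowerSeries.X 0 ^ lFun f ξ * MvPowerSeries.X 1 ^ lFun f ν * ft →
        ordPS ft = lFun f (ξ + ν) - lFun f ξ - lFun f ν := by
  have hT : Function.Injective (monomialExp ξ ν) := monomialExp_injective (hdet ▸ one_ne_zero)
  refine ⟨hT, (existsUnique_congr fun F => Function.eq_extend_zero_iff hT).1
    (coef_bijective.existsUnique _), fun F ⟨hsupp, _⟩ => ⟨?_, fun ft hft => ?_⟩⟩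
  · have hξ : lFun F (1, 0) = lFun f ξ := by simpa using lFun_eq_of_supp_eq_image hsupp (1, 0)
    have hν : lFun F (0, 1) = lFun f ν := by simpa using lFun_eq_of_supp_eq_image hsupp (0, 1)
    simpa only [hξ, hν] using existsUnique_eq_X_pow_lFun_mul F
  · rw [ordPS_eq_lFun, lFun_eq_of_eq_X_pow_mul hft, lFun_eq_of_supp_eq_image hsupp]
    simp [Nat.sub_sub]

/-- Let f ≠ 0 and ξ, ν ∈ ℕ² with det(ξ,ν) = 1.  The map T : (i,j) ↦ (iξ₁+jξ₂, iν₁+jν₂)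
is injective on ℕ², so F = f∘φ_σ = Σ_{(i,j)∈supp f} a_{ij} u^{iξ₁+jξ₂} v^{iν₁+jν₂}
is a well-defined power series whose support is T(supp f).  Moreover there is a unique
proper preimage f̃ with F = u^{l(f,ξ)} v^{l(f,ν)} · f̃, and
ord f̃ = l(f,ξ+ν) − l(f,ξ) − l(f,ν). -/
theorem proper_preimage_order (f : PS) (hf : f ≠ 0) (ξ ν : ℕ × ℕ)
    (hdet : (ξ.1 : ℤ) * ν.2 - (ξ.2 : ℤ) * ν.1 = 1) :
    Function.Injective
      (fun p : ℕ × ℕ => (p.1 * ξ.1 + p.2 * ξ.2, p.1 * ν.1 + p.2 * ν.2)) ∧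
    (∃! F : PS,
      supp F = (fun p : ℕ × ℕ => (p.1 * ξ.1 + p.2 * ξ.2, p.1 * ν.1 + p.2 * ν.2)) '' supp f ∧
      ∀ p : ℕ × ℕ, coef F (p.1 * ξ.1 + p.2 * ξ.2, p.1 * ν.1 + p.2 * ν.2) = coef f p) ∧
    ∀ F : PS,
      (supp F = (fun p : ℕ × ℕ => (p.1 * ξ.1 + p.2 * ξ.2, p.1 * ν.1 + p.2 * ν.2)) '' supp f ∧
       ∀ p : ℕ × ℕ, coef F (p.1 * ξ.1 + p.2 * ξ.2, p.1 * ν.1 + p.2 * ν.2) = coef f p) →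
      (∃! ft : PS,
        F = MvPowerSeries.X 0 ^ lFun f ξ * MvPowerSeries.X 1 ^ lFun f ν * ft) ∧
      ∀ ft : PS,
        F = MvPowerSeries.X 0 ^ lFun f ξ * MvPowerSeries.X 1 ^ lFun f ν * ft →
        ordPS ft = lFun f (ξ + ν) - lFun f ξ - lFun f ν :=
  proper_preimage_order_general f ξ ν hdet

end
end

section
/- Let f ∈ ℂ[[x,y]] be a convenient power series and suppose f = u · g₁ · g₂ ⋯ g_m, where u is a unit of ℂ[[x,y]] and g₁, …, g_m are irreducible elements of ℂ[[x,y]] that are pairwise non-associated. Then m ≤ r(Δ_f). (That is, the number of branches r₀(f) of the curve f = 0 at 0 is at most the number of lattice points on the Newton polygon of f minus one.) -/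
open MeasureTheory Pointwise

noncomputable section

/-- f is convenient if f(x,0) ≠ 0 and f(0,y) ≠ 0. -/
def Convenient (f : PS) : Prop := (∃ i, coef f (i, 0) ≠ 0) ∧ (∃ j, coef f (0, j) ≠ 0)

/-- The Newton diagram Δ_f ⊂ ℝ²: the convex hull of ∪_{(i,j) ∈ supp f} ((i,j) + ℝ₊²). -/
def newtonDiagram (f : PS) : Set (ℝ × ℝ) :=
  convexHull ℝ (⋃ p ∈ supp f, {q : ℝ × ℝ | (p.1 : ℝ) ≤ q.1 ∧ (p.2 : ℝ) ≤ q.2})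

/-- The first quadrant ℝ₊² ⊂ ℝ². -/
def quadrant : Set (ℝ × ℝ) := {q | 0 ≤ q.1 ∧ 0 ≤ q.2}

/-- P(Δ) = Area(ℝ₊² ∖ Δ) (Lebesgue measure). -/
def areaP (Δ : Set (ℝ × ℝ)) : ℝ := (volume (quadrant \ Δ)).toReal

/-- a: the t-order of f(t,0), i.e. where Δ_f meets the horizontal axis. -/
def xOrder (f : PS) : ℕ := sInf {i | coef f (i, 0) ≠ 0}

/-- b: the t-order of f(0,t), i.e. where Δ_f meets the vertical axis. -/
def yOrder (f : PS) : ℕ := sInf {j | coef f (0, j) ≠ 0}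

/-- μ(Δ_f) = 2P(Δ_f) − a − b + 1. -/
def muNewton (f : PS) : ℝ := 2 * areaP (newtonDiagram f) - xOrder f - yOrder f + 1

/-- The Newton polygon N_f: the union of the compact faces of Δ_f, i.e. the points of Δ_f
that minimize over Δ_f some linear form with strictly positive coefficients. -/
def newtonPolygon (f : PS) : Set (ℝ × ℝ) :=
  {q | q ∈ newtonDiagram f ∧ ∃ w : ℝ × ℝ, 0 < w.1 ∧ 0 < w.2 ∧
    ∀ q' ∈ newtonDiagram f, q.1 * w.1 + q.2 * w.2 ≤ q'.1 * w.1 + q'.2 * w.2}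

/-- r(Δ_f): the number of points of ℤ² lying on the Newton polygon N_f, minus 1. -/
def rNewton (f : PS) : ℕ :=
  Nat.card {p : ℤ × ℤ // ((p.1 : ℝ), (p.2 : ℝ)) ∈ newtonPolygon f} - 1

/-- δ(Δ_f) = (μ(Δ_f) + r(Δ_f) − 1)/2. -/
def deltaNewton (f : PS) : ℝ := (muNewton f + rNewton f - 1) / 2

/-- The mixed Minkowski volume [Δ_f, Δ_g] = P(Δ_f + Δ_g) − P(Δ_f) − P(Δ_g),
where Δ_f + Δ_g is the Minkowski sum. -/
def mixedVol (f g : PS) : ℝ :=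
  areaP (newtonDiagram f + newtonDiagram g) - areaP (newtonDiagram f) - areaP (newtonDiagram g)

/-- The part of the support of f lying on the face of Δ_f determined by the weight w. -/
def face (f : PS) (w : ℕ × ℕ) : Set (ℕ × ℕ) :=
  {p | p ∈ supp f ∧ p.1 * w.1 + p.2 * w.2 = lFun f w}

/-- The partial derivative ∂f/∂x_k of a power series in two variables. -/
def pd (k : Fin 2) (f : PS) : PS :=
  fun d => ((d k : ℂ) + 1) * MvPowerSeries.coeff (d + Finsupp.single k 1) f

/-- f is Newton nondegenerate: for every compact face γ of Δ_f (the faces of Δ_f cut out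
by a weight w with strictly positive coordinates), the system
x·∂f_γ/∂x = y·∂f_γ/∂y = 0 has no solution in (ℂ∖{0})². -/
def NewtonND (f : PS) : Prop :=
  ∀ w : ℕ × ℕ, 1 ≤ w.1 → 1 ≤ w.2 →
    ¬ ∃ x y : ℂ, x ≠ 0 ∧ y ≠ 0 ∧
      (∑ᶠ p ∈ face f w, (p.1 : ℂ) * coef f p * x ^ p.1 * y ^ p.2) = 0 ∧
      (∑ᶠ p ∈ face f w, (p.2 : ℂ) * coef f p * x ^ p.1 * y ^ p.2) = 0

/-- The pair (f,g) is nondegenerate: for every w ∈ ℕ² ∖ {(0,0)} the system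
f_w = g_w = 0 has no solution in (ℂ∖{0})². -/
def PairND (f g : PS) : Prop :=
  ∀ w : ℕ × ℕ, w ≠ (0, 0) →
    ¬ ∃ x y : ℂ, x ≠ 0 ∧ y ≠ 0 ∧
      (∑ᶠ p ∈ face f w, coef f p * x ^ p.1 * y ^ p.2) = 0 ∧
      (∑ᶠ p ∈ face g w, coef g p * x ^ p.1 * y ^ p.2) = 0


namespace NB

lemma idx_apply (p : ℕ × ℕ) : idx p 0 = p.1 ∧ idx p 1 = p.2 := by
  simp [idx]

lemma idx_eta (d : Fin 2 →₀ ℕ) : idx (d 0, d 1) = d := by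
  ext k
  fin_cases k <;> simp [idx]

lemma idx_add (p q : ℕ × ℕ) : idx (p + q) = idx p + idx q := by
  ext k
  fin_cases k <;> simp [idx]

lemma idx_inj : Function.Injective idx := by
  intro p q h
  have h0 := congrArg (fun d => d 0) h
  have h1 := congrArg (fun d => d 1) h
  simp only [idx] at h0 h1
  simp at h0 h1
  exact Prod.ext h0 h1

lemma idx_zero : idx (0, 0) = 0 := by
  ext k; fin_cases k <;> simp [idx]

/-- weighted degree -/
def Lw (v p : ℕ × ℕ) : ℕ := p.1 * v.1 + p.2 * v.2

lemma coef_mul_support (f g : PS) (r : ℕ × ℕ) (h : coef (f * g) r ≠ 0) :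
    ∃ p ∈ supp f, ∃ q ∈ supp g, p + q = r := by
  classical
  rw [coef, MvPowerSeries.coeff_mul] at h
  obtain ⟨ab, hab, hne⟩ := Finset.exists_ne_zero_of_sum_ne_zero h
  rw [Finset.HasAntidiagonal.mem_antidiagonal] at hab
  refine ⟨(ab.1 0, ab.1 1), ?_, (ab.2 0, ab.2 1), ?_, ?_⟩
  · simp only [supp, Set.mem_setOf_eq, coef, idx_eta]
    intro h0; rw [h0] at hne; simp at hne
  · simp only [supp, Set.mem_setOf_eq, coef, idx_eta]
    intro h0; rw [h0] at hne; simp at hne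
  · apply idx_inj
    rw [idx_add, idx_eta, idx_eta, hab]

lemma coef_mul_single (f g : PS) (p q : ℕ × ℕ)
    (h : ∀ s ∈ supp f, ∀ t ∈ supp g, s + t = p + q → s = p ∧ t = q) :
    coef (f * g) (p + q) = coef f p * coef g q := by
  classical
  rw [coef, MvPowerSeries.coeff_mul]
  rw [Finset.sum_eq_single (idx p, idx q)]
  · rfl
  · intro ab hab hne
    rw [Finset.HasAntidiagonal.mem_antidiagonal] at hab
    by_contra hcon
    have h1 : coef f (ab.1 0, ab.1 1) ≠ 0 := by
      intro h0
      apply hcon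
      rw [show MvPowerSeries.coeff ab.1 f = coef f (ab.1 0, ab.1 1) by rw [coef, idx_eta], h0,
        zero_mul]
    have h2 : coef g (ab.2 0, ab.2 1) ≠ 0 := by
      intro h0
      apply hcon
      rw [show MvPowerSeries.coeff ab.2 g = coef g (ab.2 0, ab.2 1) by rw [coef, idx_eta], h0,
        mul_zero]
    have hsum : (ab.1 0, ab.1 1) + (ab.2 0, ab.2 1) = p + q := by
      apply idx_inj
      rw [idx_add, idx_eta, idx_eta, hab]
    obtain ⟨e1, e2⟩ := h _ h1 _ h2 hsum
    apply hne
    have : ab.1 = idx p := by rw [← e1, idx_eta]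
    have : ab.2 = idx q := by rw [← e2, idx_eta]
    ext1 <;> simp_all
  · intro hmem
    exfalso
    apply hmem
    rw [Finset.HasAntidiagonal.mem_antidiagonal]
    exact (idx_add p q).symm


/-- `p` is a point of the face of `f` at weight `v` with maximal x-coordinate. -/
def IsTop (f : PS) (v : ℕ × ℕ) (p : ℕ × ℕ) : Prop :=
  p ∈ supp f ∧ (∀ r ∈ supp f, Lw v p ≤ Lw v r) ∧ (∀ r ∈ supp f, Lw v r = Lw v p → r.1 ≤ p.1)

/-- `p` is a point of the face of `f` at weight `v` with minimal x-coordinate. -/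
def IsBot (f : PS) (v : ℕ × ℕ) (p : ℕ × ℕ) : Prop :=
  p ∈ supp f ∧ (∀ r ∈ supp f, Lw v p ≤ Lw v r) ∧ (∀ r ∈ supp f, Lw v r = Lw v p → p.1 ≤ r.1)

lemma Lw_add (v p q : ℕ × ℕ) : Lw v (p + q) = Lw v p + Lw v q := by
  simp [Lw, Prod.fst_add, Prod.snd_add]; ring

lemma isTop_mul {f g : PS} {v p q : ℕ × ℕ} (hv2 : 1 ≤ v.2)
    (hp : IsTop f v p) (hq : IsTop g v q) : IsTop (f * g) v (p + q) := by
  obtain ⟨hps, hpm, hpt⟩ := hp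
  obtain ⟨hqs, hqm, hqt⟩ := hq
  have key : ∀ s ∈ supp f, ∀ t ∈ supp g, s + t = p + q → s = p ∧ t = q := by
    intro s hs t ht hst
    have h1 : Lw v p ≤ Lw v s := hpm s hs
    have h2 : Lw v q ≤ Lw v t := hqm t ht
    have h3 : Lw v s + Lw v t = Lw v p + Lw v q := by rw [← Lw_add, ← Lw_add, hst]
    have e1 : Lw v s = Lw v p := by omega
    have e2 : Lw v t = Lw v q := by omega
    have x1 : s.1 ≤ p.1 := hpt s hs e1
    have x2 : t.1 ≤ q.1 := hqt t ht e2
    have hx : s.1 + t.1 = p.1 + q.1 := by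
      have := congrArg Prod.fst hst; simpa using this
    have ex1 : s.1 = p.1 := by omega
    have ex2 : t.1 = q.1 := by omega
    have ey1 : s.2 = p.2 := by
      simp only [Lw] at e1
      have := hv2; nlinarith [e1]
    have ey2 : t.2 = q.2 := by
      simp only [Lw] at e2
      nlinarith [e2]
    exact ⟨Prod.ext ex1 ey1, Prod.ext ex2 ey2⟩
  have hmem : (p + q) ∈ supp (f * g) := by
    have : coef (f * g) (p + q) = coef f p * coef g q := coef_mul_single f g p q key
    simp only [supp, Set.mem_setOf_eq, this]
    exact mul_ne_zero hps hqs
  refine ⟨hmem, ?_, ?_⟩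
  · intro r hr
    obtain ⟨s, hs, t, ht, hst⟩ := coef_mul_support f g r hr
    have : Lw v r = Lw v s + Lw v t := by rw [← hst, Lw_add]
    have h1 := hpm s hs
    have h2 := hqm t ht
    rw [Lw_add]; omega
  · intro r hr hle
    obtain ⟨s, hs, t, ht, hst⟩ := coef_mul_support f g r hr
    have hLr : Lw v r = Lw v s + Lw v t := by rw [← hst, Lw_add]
    have h1 := hpm s hs
    have h2 := hqm t ht
    rw [Lw_add] at hle
    have e1 : Lw v s = Lw v p := by omega
    have e2 : Lw v t = Lw v q := by omega
    have x1 : s.1 ≤ p.1 := hpt s hs e1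
    have x2 : t.1 ≤ q.1 := hqt t ht e2
    have : r.1 = s.1 + t.1 := by
      have := congrArg Prod.fst hst; simp at this; omega
    simp only [Prod.fst_add]; omega

lemma isBot_mul {f g : PS} {v p q : ℕ × ℕ} (hv2 : 1 ≤ v.2)
    (hp : IsBot f v p) (hq : IsBot g v q) : IsBot (f * g) v (p + q) := by
  obtain ⟨hps, hpm, hpt⟩ := hp
  obtain ⟨hqs, hqm, hqt⟩ := hq
  have key : ∀ s ∈ supp f, ∀ t ∈ supp g, s + t = p + q → s = p ∧ t = q := by
    intro s hs t ht hst
    have h1 : Lw v p ≤ Lw v s := hpm s hs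
    have h2 : Lw v q ≤ Lw v t := hqm t ht
    have h3 : Lw v s + Lw v t = Lw v p + Lw v q := by rw [← Lw_add, ← Lw_add, hst]
    have e1 : Lw v s = Lw v p := by omega
    have e2 : Lw v t = Lw v q := by omega
    have x1 : p.1 ≤ s.1 := hpt s hs e1
    have x2 : q.1 ≤ t.1 := hqt t ht e2
    have hx : s.1 + t.1 = p.1 + q.1 := by
      have := congrArg Prod.fst hst; simpa using this
    have ex1 : s.1 = p.1 := by omega
    have ex2 : t.1 = q.1 := by omega
    have ey1 : s.2 = p.2 := by
      simp only [Lw] at e1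
      nlinarith [e1]
    have ey2 : t.2 = q.2 := by
      simp only [Lw] at e2
      nlinarith [e2]
    exact ⟨Prod.ext ex1 ey1, Prod.ext ex2 ey2⟩
  have hmem : (p + q) ∈ supp (f * g) := by
    have : coef (f * g) (p + q) = coef f p * coef g q := coef_mul_single f g p q key
    simp only [supp, Set.mem_setOf_eq, this]
    exact mul_ne_zero hps hqs
  refine ⟨hmem, ?_, ?_⟩
  · intro r hr
    obtain ⟨s, hs, t, ht, hst⟩ := coef_mul_support f g r hr
    have : Lw v r = Lw v s + Lw v t := by rw [← hst, Lw_add]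
    have h1 := hpm s hs
    have h2 := hqm t ht
    rw [Lw_add]; omega
  · intro r hr hle
    obtain ⟨s, hs, t, ht, hst⟩ := coef_mul_support f g r hr
    have hLr : Lw v r = Lw v s + Lw v t := by rw [← hst, Lw_add]
    have h1 := hpm s hs
    have h2 := hqm t ht
    rw [Lw_add] at hle
    have e1 : Lw v s = Lw v p := by omega
    have e2 : Lw v t = Lw v q := by omega
    have x1 : p.1 ≤ s.1 := hpt s hs e1
    have x2 : q.1 ≤ t.1 := hqt t ht e2
    have : r.1 = s.1 + t.1 := by
      have := congrArg Prod.fst hst; simp at this; omega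
    simp only [Prod.fst_add]; omega

lemma isTop_of_const {f : PS} (h : coef f (0, 0) ≠ 0) (v : ℕ × ℕ)
    (hv1 : 1 ≤ v.1) : IsTop f v (0, 0) ∧ IsBot f v (0, 0) := by
  have hmem : (0, 0) ∈ supp f := h
  have hmin : ∀ r ∈ supp f, Lw v (0, 0) ≤ Lw v r := by
    intro r _; simp [Lw]
  refine ⟨⟨hmem, hmin, ?_⟩, ⟨hmem, hmin, ?_⟩⟩
  · intro r _ hr
    simp only [Lw, zero_mul, add_zero] at hr
    have h1 : r.1 * v.1 = 0 := by omega
    rcases Nat.mul_eq_zero.mp h1 with h | h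
    · omega
    · omega
  · intro r _ _
    simp

lemma exists_isTop {f : PS} (hf : (supp f).Nonempty) (v : ℕ × ℕ)
    (hv1 : 1 ≤ v.1) : ∃ p, IsTop f v p := by
  set S : Set ℕ := Lw v '' supp f with hS
  have hSne : S.Nonempty := hf.image _
  set ℓ := sInf S with hℓ
  have hmin : ∀ r ∈ supp f, ℓ ≤ Lw v r := fun r hr => Nat.sInf_le ⟨r, hr, rfl⟩
  set X : Set ℕ := {n | ∃ p ∈ supp f, Lw v p = ℓ ∧ p.1 = n} with hX
  have hXne : X.Nonempty := by
    obtain ⟨p, hp, hpn⟩ := Nat.sInf_mem hSne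
    exact ⟨p.1, p, hp, hpn, rfl⟩
  have hXbdd : BddAbove X := by
    refine ⟨ℓ, fun n hn => ?_⟩
    obtain ⟨p, hp, hpl, hpn⟩ := hn
    have : p.1 * v.1 ≤ Lw v p := Nat.le_add_right _ _
    nlinarith [hpl, hpn]
  obtain ⟨p, hp, hpl, hpn⟩ := Nat.sSup_mem hXne hXbdd
  refine ⟨p, hp, fun r hr => hpl ▸ hmin r hr, fun r hr hre => ?_⟩
  rw [hpn]
  exact le_csSup hXbdd ⟨r, hr, by rw [hre, hpl], rfl⟩

lemma exists_isBot {f : PS} (hf : (supp f).Nonempty) (v : ℕ × ℕ) :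
    ∃ p, IsBot f v p := by
  set S : Set ℕ := Lw v '' supp f with hS
  have hSne : S.Nonempty := hf.image _
  set ℓ := sInf S with hℓ
  have hmin : ∀ r ∈ supp f, ℓ ≤ Lw v r := fun r hr => Nat.sInf_le ⟨r, hr, rfl⟩
  set X : Set ℕ := {n | ∃ p ∈ supp f, Lw v p = ℓ ∧ p.1 = n} with hX
  have hXne : X.Nonempty := by
    obtain ⟨p, hp, hpn⟩ := Nat.sInf_mem hSne
    exact ⟨p.1, p, hp, hpn, rfl⟩
  obtain ⟨p, hp, hpl, hpn⟩ := Nat.sInf_mem hXne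
  refine ⟨p, hp, fun r hr => hpl ▸ hmin r hr, fun r hr hre => ?_⟩
  rw [hpn]
  exact Nat.sInf_le ⟨r, hr, by rw [hre, hpl], rfl⟩


lemma exists_crit {g : PS} (h0 : coef g (0, 0) = 0)
    (hx : ∃ p ∈ supp g, p.2 = 0) (hy : ∃ p ∈ supp g, p.1 = 0) :
    ∃ v : ℕ × ℕ, 1 ≤ v.1 ∧ 1 ≤ v.2 ∧ Nat.gcd v.1 v.2 = 1 ∧
      ∃ p ∈ supp g, ∃ q ∈ supp g,
        (∀ r ∈ supp g, Lw v p ≤ Lw v r) ∧ Lw v q = Lw v p ∧ p.1 < q.1 := by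
  classical
  -- the order on the x-axis
  obtain ⟨px, hpx, hpx2⟩ := hx
  obtain ⟨py, hpy, hpy1⟩ := hy
  set A : Set ℕ := {i | (i, 0) ∈ supp g} with hA
  have hAne : A.Nonempty := ⟨px.1, by rwa [hA, Set.mem_setOf_eq, ← hpx2]⟩
  set a := sInf A with ha
  have haA : (a, 0) ∈ supp g := Nat.sInf_mem hAne
  have ha1 : 1 ≤ a := by
    rcases Nat.eq_zero_or_pos a with h | h
    · exfalso; rw [h] at haA; exact haA h0
    · exact h
  set B : Set ℕ := {j | (0, j) ∈ supp g} with hB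
  have hBne : B.Nonempty := ⟨py.2, by rwa [hB, Set.mem_setOf_eq, ← hpy1]⟩
  set b := sInf B with hb
  have hbB : (0, b) ∈ supp g := Nat.sInf_mem hBne
  have hb1 : 1 ≤ b := by
    rcases Nat.eq_zero_or_pos b with h | h
    · exfalso; rw [h] at hbB; exact hbB h0
    · exact h
  have hbmin : ∀ j, (0, j) ∈ supp g → b ≤ j := fun j hj => Nat.sInf_le hj
  -- minimize the slope over the (finite) box
  set box : Finset (ℕ × ℕ) :=
    (Finset.range (a + 1) ×ˢ Finset.range (b + 1)).filter
      (fun r => r ∈ supp g ∧ 1 ≤ r.1) with hbox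
  have hmembox : ∀ r : ℕ × ℕ, r ∈ box ↔ (r.1 < a + 1 ∧ r.2 < b + 1) ∧ r ∈ supp g ∧ 1 ≤ r.1 := by
    intro r
    simp [hbox, Finset.mem_filter, Finset.mem_product]
  have haBox : (a, 0) ∈ box := by
    rw [hmembox]
    exact ⟨⟨by omega, by omega⟩, haA, ha1⟩
  obtain ⟨p, hpbox, hpmin⟩ :=
    Finset.exists_min_image box (fun r => ((r.2 : ℚ) - b) / r.1) ⟨(a, 0), haBox⟩
  rw [hmembox] at hpbox
  obtain ⟨⟨hpa, hpb⟩, hps, hp1⟩ := hpbox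
  have hp1Q : (0 : ℚ) < (p.1 : ℚ) := by exact_mod_cast hp1
  have haQ : (0 : ℚ) < (a : ℚ) := by exact_mod_cast ha1
  have hamin := hpmin (a, 0) haBox
  simp only at hamin
  -- p.2 < b
  have hp2b : p.2 < b := by
    by_contra hcon
    push_neg at hcon
    have h1 : (0 : ℚ) ≤ ((p.2 : ℚ) - b) / p.1 := by
      apply div_nonneg _ (le_of_lt hp1Q)
      have : (b : ℚ) ≤ p.2 := by exact_mod_cast hcon
      linarith
    have h2 : (((0 : ℕ) : ℚ) - b) / a < 0 := by
      apply div_neg_of_neg_of_pos _ haQ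
      have : (0 : ℚ) < (b : ℚ) := by exact_mod_cast hb1
      push_cast; linarith
    linarith
  -- the key cross inequality against all support points with r.1 ≥ 1
  have key : ∀ r ∈ supp g, 1 ≤ r.1 →
      ((p.2 : ℤ) - b) * r.1 ≤ ((r.2 : ℤ) - b) * p.1 := by
    intro r hr hr1
    by_cases hrb : r.1 ≤ a ∧ r.2 ≤ b
    · have hrbox : r ∈ box := by rw [hmembox]; exact ⟨⟨by omega, by omega⟩, hr, hr1⟩
      have := hpmin r hrbox
      have hr1Q : (0 : ℚ) < (r.1 : ℚ) := by exact_mod_cast hr1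
      rw [div_le_div_iff₀ hp1Q hr1Q] at this
      exact_mod_cast this
    · push_neg at hrb
      by_cases hr2 : b ≤ r.2
      · have hL : ((p.2 : ℤ) - b) * r.1 ≤ 0 := by
          apply mul_nonpos_of_nonpos_of_nonneg
          · have : (p.2 : ℤ) < b := by exact_mod_cast hp2b
            linarith
          · positivity
        have hR : (0 : ℤ) ≤ ((r.2 : ℤ) - b) * p.1 := by
          apply mul_nonneg
          · have : (b : ℤ) ≤ r.2 := by exact_mod_cast hr2
            linarith
          · positivity
        linarith
      · push_neg at hr2
        have hra : a < r.1 := by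
          rcases le_or_gt r.1 a with h | h
          · exact absurd (hrb h).le (not_le.mpr hr2)
          · exact h
        -- from minimality against (a,0):
        have hcross : ((p.2 : ℤ) - b) * a ≤ (0 - b) * p.1 := by
          rw [div_le_div_iff₀ hp1Q haQ] at hamin
          exact_mod_cast hamin
        have c1 : (p.2 : ℤ) - b ≤ -1 := by
          have : (p.2 : ℤ) < b := by exact_mod_cast hp2b
          omega
        have c2 : (a : ℤ) + 1 ≤ r.1 := by exact_mod_cast hra
        have c3 : (0 : ℤ) ≤ r.2 := by positivity
        have c4 : (1 : ℤ) ≤ p.1 := by exact_mod_cast hp1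
        nlinarith [hcross, c1, c2, c3, c4]
  -- build the primitive weight
  set d := Nat.gcd (b - p.2) p.1 with hd
  have hbp2 : 1 ≤ b - p.2 := by omega
  have hdpos : 0 < d := Nat.gcd_pos_of_pos_right _ (by omega)
  set v : ℕ × ℕ := ((b - p.2) / d, p.1 / d) with hv
  have hv1d : v.1 * d = b - p.2 := Nat.div_mul_cancel (Nat.gcd_dvd_left _ _)
  have hv2d : v.2 * d = p.1 := Nat.div_mul_cancel (Nat.gcd_dvd_right _ _)
  have hv1 : 1 ≤ v.1 := by
    rcases Nat.eq_zero_or_pos v.1 with h | h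
    · exfalso; rw [h] at hv1d; omega
    · exact h
  have hv2 : 1 ≤ v.2 := by
    rcases Nat.eq_zero_or_pos v.2 with h | h
    · exfalso; rw [h] at hv2d; omega
    · exact h
  have hcop : Nat.gcd v.1 v.2 = 1 := Nat.coprime_div_gcd_div_gcd hdpos
  -- scaled values
  have hval : ∀ r : ℕ × ℕ, Lw v r * d = r.1 * (b - p.2) + r.2 * p.1 := by
    intro r
    rw [Lw, Nat.add_mul, Nat.mul_assoc, Nat.mul_assoc, hv1d, hv2d]
  have hvalb : Lw v (0, b) * d = b * p.1 := by rw [hval]; simp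
  have hvalp : Lw v p * d = b * p.1 := by
    rw [hval]
    have : p.1 * (b - p.2) + p.2 * p.1 = p.1 * ((b - p.2) + p.2) := by ring
    rw [this, Nat.sub_add_cancel (le_of_lt hp2b), Nat.mul_comm]
  refine ⟨v, hv1, hv2, hcop, (0, b), hbB, p, hps, ?_, ?_, by show 0 < p.1; omega⟩
  · -- minimality of (0,b)
    intro r hr
    have hmul : Lw v (0, b) * d ≤ Lw v r * d := by
      rw [hvalb, hval]
      rcases Nat.eq_zero_or_pos r.1 with h1 | h1
      · have : r = (0, r.2) := by rw [← h1]
        rw [this] at hr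
        have := hbmin r.2 hr
        have : b * p.1 ≤ r.2 * p.1 := Nat.mul_le_mul_right _ this
        omega
      · have hk := key r hr h1
        have hc : (b : ℤ) * p.1 ≤ r.1 * (b - p.2 : ℤ) + r.2 * p.1 := by nlinarith [hk]
        have hcast : ((b - p.2 : ℕ) : ℤ) = (b : ℤ) - p.2 := by
          rw [Nat.cast_sub (le_of_lt hp2b)]
        have : (b * p.1 : ℤ) ≤ (r.1 * (b - p.2) + r.2 * p.1 : ℕ) := by
          push_cast [hcast]
          linarith
        exact_mod_cast this
    exact Nat.le_of_mul_le_mul_right hmul hdpos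
  · -- equal value
    have := hvalp.trans hvalb.symm
    exact Nat.eq_of_mul_eq_mul_right hdpos this


lemma mem_diagram_of_supp {f : PS} {p : ℕ × ℕ} (hp : p ∈ supp f) :
    ((p.1 : ℝ), (p.2 : ℝ)) ∈ newtonDiagram f := by
  apply subset_convexHull
  exact Set.mem_biUnion hp ⟨le_refl _, le_refl _⟩

lemma diagram_min {f : PS} {v p : ℕ × ℕ} (hmin : ∀ r ∈ supp f, Lw v p ≤ Lw v r) :
    ∀ q' ∈ newtonDiagram f, ((Lw v p : ℕ) : ℝ) ≤ q'.1 * v.1 + q'.2 * v.2 := by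
  intro q' hq'
  set C : Set (ℝ × ℝ) := {q | ((Lw v p : ℕ) : ℝ) ≤ q.1 * v.1 + q.2 * v.2} with hC
  have hconv : Convex ℝ C := by
    intro x hx y hy α β hα hβ hαβ
    simp only [hC, Set.mem_setOf_eq] at hx hy ⊢
    have h1 : α * (x.1 * v.1 + x.2 * v.2) + β * (y.1 * v.1 + y.2 * v.2)
        = (α • x + β • y).1 * v.1 + (α • x + β • y).2 * v.2 := by
      simp [Prod.smul_fst, Prod.smul_snd, smul_eq_mul]
      ring
    nlinarith [mul_le_mul_of_nonneg_left hx hα, mul_le_mul_of_nonneg_left hy hβ]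
  have hsub : (⋃ p ∈ supp f, {q : ℝ × ℝ | (p.1 : ℝ) ≤ q.1 ∧ (p.2 : ℝ) ≤ q.2}) ⊆ C := by
    intro z hz
    obtain ⟨r, hr, hz'⟩ := Set.mem_iUnion₂.mp hz
    obtain ⟨hz1, hz2⟩ := hz'
    have hl : Lw v p ≤ Lw v r := hmin r hr
    have hl' : ((Lw v r : ℕ) : ℝ) ≤ z.1 * v.1 + z.2 * v.2 := by
      have hv1 : (0 : ℝ) ≤ (v.1 : ℝ) := by positivity
      have hv2 : (0 : ℝ) ≤ (v.2 : ℝ) := by positivity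
      have hr1 : (0:ℝ) ≤ (r.1:ℝ) := by positivity
      have hr2 : (0:ℝ) ≤ (r.2:ℝ) := by positivity
      simp only [Lw]
      push_cast
      nlinarith [mul_le_mul_of_nonneg_right hz1 hv1, mul_le_mul_of_nonneg_right hz2 hv2]
    calc ((Lw v p : ℕ) : ℝ) ≤ ((Lw v r : ℕ) : ℝ) := by exact_mod_cast hl
      _ ≤ _ := hl'
  exact convexHull_min hsub hconv hq'

lemma mem_polygon_of_min {f : PS} {v p : ℕ × ℕ} (hv1 : 1 ≤ v.1) (hv2 : 1 ≤ v.2)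
    (hp : p ∈ supp f) (hmin : ∀ r ∈ supp f, Lw v p ≤ Lw v r) :
    ((p.1 : ℝ), (p.2 : ℝ)) ∈ newtonPolygon f := by
  refine ⟨mem_diagram_of_supp hp, ((v.1 : ℝ), (v.2 : ℝ)),
    by show (0:ℝ) < (v.1:ℝ); exact_mod_cast hv1,
    by show (0:ℝ) < (v.2:ℝ); exact_mod_cast hv2, ?_⟩
  intro q' hq'
  have h1 := diagram_min hmin q' hq'
  show ((p.1:ℝ)) * ((v.1:ℝ)) + ((p.2:ℝ)) * ((v.2:ℝ)) ≤ q'.1 * ((v.1:ℝ)) + q'.2 * ((v.2:ℝ))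
  have h2 : ((Lw v p : ℕ) : ℝ) = (p.1:ℝ) * (v.1:ℝ) + (p.2:ℝ) * (v.2:ℝ) := by
    simp only [Lw]; push_cast; ring
  rw [← h2]
  exact h1

lemma bot_le_top {f : PS} {v B T : ℕ × ℕ} (hv2 : 1 ≤ v.2) (hB : IsBot f v B) (hT : IsTop f v T) :
    Lw v B = Lw v T ∧ B.1 ≤ T.1 ∧ T.2 ≤ B.2 := by
  have h1 : Lw v B ≤ Lw v T := hB.2.1 T hT.1
  have h2 : Lw v T ≤ Lw v B := hT.2.1 B hB.1
  have heq : Lw v B = Lw v T := le_antisymm h1 h2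
  have hx : B.1 ≤ T.1 := hB.2.2 T hT.1 heq.symm
  have hy : T.2 ≤ B.2 := by
    simp only [Lw] at heq
    rcases Nat.lt_or_ge B.2 T.2 with h | h
    · exfalso
      have e1 : B.1 * v.1 ≤ T.1 * v.1 := Nat.mul_le_mul_right _ hx
      have e2 : B.2 * v.2 < T.2 * v.2 := Nat.mul_lt_mul_of_lt_of_le h (le_refl _) (by omega)
      omega
    · exact h
  exact ⟨heq, hx, hy⟩

/-- the main segment lemma: lattice points on the face segment between Bot and Top -/
lemma mem_polygon_segment {f : PS} {v B T : ℕ × ℕ} (hv1 : 1 ≤ v.1) (hv2 : 1 ≤ v.2)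
    (hB : IsBot f v B) (hT : IsTop f v T) (k : ℕ) (hk : B.1 + k * v.2 ≤ T.1) :
    k * v.1 ≤ B.2 ∧
      (((B.1 + k * v.2 : ℕ) : ℝ), ((B.2 - k * v.1 : ℕ) : ℝ)) ∈ newtonPolygon f := by
  obtain ⟨heq, hx, hy⟩ := bot_le_top hv2 hB hT
  -- Dx * v.1 = Dy * v.2
  have hDxy : (T.1 - B.1) * v.1 = (B.2 - T.2) * v.2 := by
    simp only [Lw] at heq
    zify [hx, hy]
    linarith [heq]
  have hkv1 : k * v.1 ≤ B.2 - T.2 := by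
    have h1 : k * v.2 * v.1 ≤ (T.1 - B.1) * v.1 := by
      apply Nat.mul_le_mul_right
      omega
    rw [hDxy] at h1
    have : k * v.1 * v.2 ≤ (B.2 - T.2) * v.2 := by nlinarith [h1]
    exact Nat.le_of_mul_le_mul_right this (by omega)
  have hkB2 : k * v.1 ≤ B.2 := by omega
  refine ⟨hkB2, ?_⟩
  -- the value of the lattice point equals the minimal value
  have hval : Lw v (B.1 + k * v.2, B.2 - k * v.1) = Lw v B := by
    simp only [Lw]
    zify [hkB2]
    ring
  rcases Nat.eq_zero_or_pos k with hk0 | hk0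
  · subst hk0
    simp only [Nat.zero_mul, Nat.add_zero, Nat.sub_zero]
    exact mem_polygon_of_min hv1 hv2 hB.1 hB.2.1
  -- k ≥ 1 : the point is a proper convex combination
  have hDx1 : 1 ≤ T.1 - B.1 := by nlinarith [hk, hk0, hv2]
  set Dx : ℝ := ((T.1 - B.1 : ℕ) : ℝ) with hDx
  have hDxpos : (0 : ℝ) < Dx := by
    rw [hDx]; exact_mod_cast hDx1
  set t : ℝ := ((k * v.2 : ℕ) : ℝ) / Dx with ht
  have ht0 : 0 ≤ t := by positivity
  have ht1 : t ≤ 1 := by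
    rw [ht, div_le_one hDxpos, hDx]
    exact_mod_cast by omega
  have hmem : (1 - t) • ((B.1 : ℝ), (B.2 : ℝ)) + t • ((T.1 : ℝ), (T.2 : ℝ))
      ∈ newtonDiagram f := by
    apply convex_convexHull ℝ _ (mem_diagram_of_supp hB.1) (mem_diagram_of_supp hT.1)
      (by linarith) ht0 (by ring)
  have hpt : (1 - t) • ((B.1 : ℝ), (B.2 : ℝ)) + t • ((T.1 : ℝ), (T.2 : ℝ))
      = (((B.1 + k * v.2 : ℕ) : ℝ), ((B.2 - k * v.1 : ℕ) : ℝ)) := by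
    have hDxR : Dx = (T.1 : ℝ) - B.1 := by
      rw [hDx]; push_cast [hx]; ring
    have hDyR : ((B.2 - T.2 : ℕ) : ℝ) = (B.2 : ℝ) - T.2 := by push_cast [hy]; ring
    have hrel : ((T.1 : ℝ) - B.1) * v.1 = ((B.2 : ℝ) - T.2) * v.2 := by
      have := hDxy
      zify [hx, hy] at this
      exact_mod_cast this
    have hv2R : (0:ℝ) < (v.2 : ℝ) := by exact_mod_cast hv2
    have hDxne : (T.1 : ℝ) - B.1 ≠ 0 := by rw [← hDxR]; exact ne_of_gt hDxpos
    ext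
    · show (1 - t) * (B.1 : ℝ) + t * (T.1 : ℝ) = ((B.1 + k * v.2 : ℕ) : ℝ)
      rw [ht, hDxR]
      push_cast
      field_simp
      ring
    · show (1 - t) * (B.2 : ℝ) + t * (T.2 : ℝ) = ((B.2 - k * v.1 : ℕ) : ℝ)
      rw [ht, hDxR]
      push_cast [hkB2]
      field_simp
      nlinarith [hrel]
  refine ⟨by rw [← hpt]; exact hmem, ((v.1 : ℝ), (v.2 : ℝ)),
    by show (0:ℝ) < (v.1:ℝ); exact_mod_cast hv1,
    by show (0:ℝ) < (v.2:ℝ); exact_mod_cast hv2, ?_⟩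
  intro q' hq'
  have h1 := diagram_min hB.2.1 q' hq'
  have h2 : (((B.1 + k * v.2 : ℕ) : ℝ)) * (v.1:ℝ) + (((B.2 - k * v.1 : ℕ) : ℝ)) * (v.2:ℝ)
      = ((Lw v B : ℕ) : ℝ) := by
    rw [← hval]
    simp only [Lw]
    push_cast [hkB2]
    ring
  show (((B.1 + k * v.2 : ℕ) : ℝ)) * (v.1:ℝ) + (((B.2 - k * v.1 : ℕ) : ℝ)) * (v.2:ℝ)
      ≤ q'.1 * (v.1:ℝ) + q'.2 * (v.2:ℝ)
  rw [h2]
  exact h1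

lemma cross_mono {f : PS} {v w p q : ℕ × ℕ}
    (hp : p ∈ supp f) (hq : q ∈ supp f)
    (hpv : ∀ r ∈ supp f, Lw v p ≤ Lw v r) (hqw : ∀ r ∈ supp f, Lw w q ≤ Lw w r)
    (hslope : v.1 * w.2 < w.1 * v.2) : q.1 ≤ p.1 := by
  have h1 : Lw v p ≤ Lw v q := hpv q hq
  have h2 : Lw w q ≤ Lw w p := hqw p hp
  simp only [Lw] at h1 h2
  by_contra hcon
  push_neg at hcon
  have c1 : (p.1 : ℤ) * v.1 + p.2 * v.2 ≤ (q.1 : ℤ) * v.1 + q.2 * v.2 := by exact_mod_cast h1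
  have c2 : (q.1 : ℤ) * w.1 + q.2 * w.2 ≤ (p.1 : ℤ) * w.1 + p.2 * w.2 := by exact_mod_cast h2
  have c3 : (v.1 : ℤ) * w.2 < (w.1 : ℤ) * v.2 := by exact_mod_cast hslope
  have c4 : (p.1 : ℤ) < q.1 := by exact_mod_cast hcon
  nlinarith [mul_le_mul_of_nonneg_left c1 (show (0:ℤ) ≤ w.2 by positivity),
    mul_le_mul_of_nonneg_left c2 (show (0:ℤ) ≤ v.2 by positivity),
    mul_pos (show (0:ℤ) < (q.1 : ℤ) - p.1 by omega)
      (show (0:ℤ) < (w.1 : ℤ) * v.2 - v.1 * w.2 by omega)]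

lemma prim_eq {v w : ℕ × ℕ} (hv1 : 1 ≤ v.1) (hv2 : 1 ≤ v.2) (hw1 : 1 ≤ w.1)
    (hw2 : 1 ≤ w.2) (hv : Nat.gcd v.1 v.2 = 1) (hw : Nat.gcd w.1 w.2 = 1)
    (h : v.1 * w.2 = w.1 * v.2) : v = w := by
  have hd1 : v.1 ∣ w.1 * v.2 := ⟨w.2, h.symm ▸ by ring⟩
  have hd1' : v.1 ∣ w.1 := (Nat.Coprime.dvd_of_dvd_mul_right hv) hd1
  have hd2 : w.1 ∣ v.1 * w.2 := ⟨v.2, h ▸ by ring⟩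
  have hd2' : w.1 ∣ v.1 := (Nat.Coprime.dvd_of_dvd_mul_right hw) hd2
  have he1 : v.1 = w.1 := Nat.dvd_antisymm hd1' hd2'
  have he2 : v.2 = w.2 := by
    rw [he1] at h
    exact (Nat.eq_of_mul_eq_mul_left (by omega) h).symm
  exact Prod.ext he1 he2


lemma coef_one_arg {r : ℕ × ℕ} (h : coef 1 r ≠ 0) : r = (0, 0) := by
  by_contra hcon
  apply h
  rw [coef, MvPowerSeries.coeff_one]
  rw [if_neg]
  intro h0
  apply hcon
  apply idx_inj
  rw [h0, idx_zero]

lemma coef_one_zero : coef (1 : PS) (0, 0) = 1 := by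
  rw [coef, idx_zero, MvPowerSeries.coeff_one, if_pos rfl]

lemma supp_prod_decomp {m : ℕ} (g : Fin m → PS) (s : Finset (Fin m)) (r : ℕ × ℕ)
    (h : r ∈ supp (∏ i ∈ s, g i)) :
    ∃ c : Fin m → ℕ × ℕ, (∀ i ∈ s, c i ∈ supp (g i)) ∧ r = ∑ i ∈ s, c i := by
  classical
  induction s using Finset.cons_induction generalizing r with
  | empty =>
    refine ⟨fun _ => (0, 0), by simp, ?_⟩
    rw [Finset.prod_empty] at h
    rw [Finset.sum_empty]
    have := coef_one_arg h
    rw [this]; rfl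
  | cons a s ha ih =>
    rw [Finset.prod_cons] at h
    obtain ⟨p, hp, q, hq, hpq⟩ := coef_mul_support _ _ _ h
    obtain ⟨c, hc, hcq⟩ := ih q hq
    refine ⟨fun i => if i = a then p else c i, ?_, ?_⟩
    · intro i hi
      rcases Finset.mem_cons.mp hi with h1 | h1
      · subst h1; simpa using hp
      · have hne : i ≠ a := by rintro rfl; exact ha h1
        simpa [hne] using hc i h1
    · rw [Finset.sum_cons, ← hpq, hcq]
      simp only [if_pos rfl]
      congr 1
      apply Finset.sum_congr rfl
      intro i hi
      have hne : i ≠ a := by rintro rfl; exact ha hi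
      simp [hne]

lemma isTop_prod {m : ℕ} (g : Fin m → PS) (v : ℕ × ℕ) (hv1 : 1 ≤ v.1) (hv2 : 1 ≤ v.2)
    (t : Fin m → ℕ × ℕ) (ht : ∀ j, IsTop (g j) v (t j)) (s : Finset (Fin m)) :
    IsTop (∏ j ∈ s, g j) v (∑ j ∈ s, t j) := by
  classical
  induction s using Finset.cons_induction with
  | empty =>
    rw [Finset.prod_empty, Finset.sum_empty]
    exact (isTop_of_const (f := 1) (by rw [coef_one_zero]; exact one_ne_zero) v hv1).1
  | cons a s ha ih =>
    rw [Finset.prod_cons, Finset.sum_cons]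
    exact isTop_mul hv2 (ht a) ih

lemma isBot_prod {m : ℕ} (g : Fin m → PS) (v : ℕ × ℕ) (hv1 : 1 ≤ v.1) (hv2 : 1 ≤ v.2)
    (t : Fin m → ℕ × ℕ) (ht : ∀ j, IsBot (g j) v (t j)) (s : Finset (Fin m)) :
    IsBot (∏ j ∈ s, g j) v (∑ j ∈ s, t j) := by
  classical
  induction s using Finset.cons_induction with
  | empty =>
    rw [Finset.prod_empty, Finset.sum_empty]
    exact (isTop_of_const (f := 1) (by rw [coef_one_zero]; exact one_ne_zero) v hv1).2
  | cons a s ha ih =>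
    rw [Finset.prod_cons, Finset.sum_cons]
    exact isBot_mul hv2 (ht a) ih

lemma coef_unit_ne (u : PSˣ) : coef (↑u : PS) (0, 0) ≠ 0 := by
  have hu : IsUnit (MvPowerSeries.constantCoeff (↑u : PS)) :=
    (MvPowerSeries.isUnit_iff_constantCoeff).mp u.isUnit
  have : coef (↑u : PS) (0, 0) = MvPowerSeries.constantCoeff (↑u : PS) := by
    rw [coef, idx_zero, MvPowerSeries.coeff_zero_eq_constantCoeff_apply]
  rw [this]
  exact hu.ne_zero

lemma coef_nonunit_zero {h : PS} (hh : ¬ IsUnit h) : coef h (0, 0) = 0 := by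
  by_contra hc
  apply hh
  rw [MvPowerSeries.isUnit_iff_constantCoeff]
  rw [isUnit_iff_ne_zero]
  rwa [coef, idx_zero, MvPowerSeries.coeff_zero_eq_constantCoeff_apply] at hc


lemma diagram_subset_quadrant (f : PS) : newtonDiagram f ⊆ quadrant := by
  apply convexHull_min
  · intro z hz
    obtain ⟨r, _, hz1, hz2⟩ := Set.mem_iUnion₂.mp hz
    constructor
    · have : (0:ℝ) ≤ (r.1:ℝ) := by positivity
      exact le_trans this hz1
    · have : (0:ℝ) ≤ (r.2:ℝ) := by positivity
      exact le_trans this hz2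
  · intro x hx y hy α β hα hβ hαβ
    constructor
    · have : (α • x + β • y).1 = α * x.1 + β * y.1 := by simp [smul_eq_mul]
      rw [this]
      have := hx.1; have := hy.1
      nlinarith [mul_nonneg hα hx.1, mul_nonneg hβ hy.1]
    · have : (α • x + β • y).2 = α * x.2 + β * y.2 := by simp [smul_eq_mul]
      rw [this]
      nlinarith [mul_nonneg hα hx.2, mul_nonneg hβ hy.2]

lemma polygon_finite {f : PS} {A B : ℕ} (hA : (A, 0) ∈ supp f) (hB : (0, B) ∈ supp f) :
    {p : ℤ × ℤ | ((p.1 : ℝ), (p.2 : ℝ)) ∈ newtonPolygon f}.Finite := by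
  apply Set.Finite.subset (Set.finite_Icc ((0 : ℤ), (0 : ℤ)) ((A : ℤ), (B : ℤ)))
  rintro ⟨p1, p2⟩ hp
  obtain ⟨hdiag, w, hw1, hw2, hmin⟩ := hp
  have hquad := diagram_subset_quadrant f hdiag
  obtain ⟨h01, h02⟩ := hquad
  simp only at h01 h02
  have hAmem : (((A:ℕ):ℝ), ((0:ℕ):ℝ)) ∈ newtonDiagram f := mem_diagram_of_supp hA
  have hBmem : (((0:ℕ):ℝ), ((B:ℕ):ℝ)) ∈ newtonDiagram f := mem_diagram_of_supp hB
  have hA' := hmin _ hAmem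
  have hB' := hmin _ hBmem
  simp only [Nat.cast_zero] at hA' hB'
  have hp1 : (p1 : ℝ) ≤ A := by
    have hz : (0:ℝ) ≤ (p2:ℝ) * w.2 := mul_nonneg h02 (le_of_lt hw2)
    nlinarith [hA', hw1, hz]
  have hp2 : (p2 : ℝ) ≤ B := by
    have hz : (0:ℝ) ≤ (p1:ℝ) * w.1 := mul_nonneg h01 (le_of_lt hw1)
    nlinarith [hB', hw2, hz]
  rw [Set.mem_Icc]
  constructor
  · rw [Prod.le_def]
    constructor
    · exact_mod_cast h01
    · exact_mod_cast h02
  · rw [Prod.le_def]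
    constructor
    · exact_mod_cast hp1
    · exact_mod_cast hp2

end NB

open NB in
/-- The number of branches r₀(f): if a convenient f factors as a unit times pairwise
non-associated irreducible factors g₁, …, g_m, then m ≤ r(Δ_f). -/
theorem branches_le_rNewton (f : PS) (hf : Convenient f) (m : ℕ) (u : PSˣ)
    (g : Fin m → PS) (hirr : ∀ i, Irreducible (g i))
    (hnass : ∀ i j, i ≠ j → ¬ Associated (g i) (g j))
    (hfact : f = (u : PS) * ∏ i, g i) :
    m ≤ rNewton f := by
  classical
  rcases Nat.eq_zero_or_pos m with hm | hm
  · subst hm; exact Nat.zero_le _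
  -- axis points of f
  obtain ⟨ia, hia⟩ := hf.1
  obtain ⟨jb, hjb⟩ := hf.2
  have hfx : ((ia, 0) : ℕ × ℕ) ∈ supp f := hia
  have hfy : ((0, jb) : ℕ × ℕ) ∈ supp f := hjb
  -- decomposition of support points of f
  have hdec : ∀ r ∈ supp f, ∃ s ∈ supp ((u : PS)), ∃ c : Fin m → ℕ × ℕ,
      (∀ i, c i ∈ supp (g i)) ∧ r = s + ∑ i, c i := by
    intro r hr
    rw [hfact] at hr
    obtain ⟨p, hp, q, hq, hpq⟩ := coef_mul_support _ _ _ hr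
    obtain ⟨c, hc, hqc⟩ := supp_prod_decomp g Finset.univ q hq
    exact ⟨p, hp, c, fun i => hc i (Finset.mem_univ i), by rw [← hpq, hqc]⟩
  -- each factor has points on both axes
  have hgx : ∀ j : Fin m, ∃ p ∈ supp (g j), p.2 = 0 := by
    intro j
    obtain ⟨s, hs, c, hc, hrc⟩ := hdec _ hfx
    refine ⟨c j, hc j, ?_⟩
    have h2 := congrArg Prod.snd hrc
    simp only [Prod.snd_add] at h2
    rw [Prod.snd_sum] at h2
    have hz : ∑ i, (c i).2 = 0 := by omega
    exact (Finset.sum_eq_zero_iff.mp hz) j (Finset.mem_univ j)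
  have hgy : ∀ j : Fin m, ∃ p ∈ supp (g j), p.1 = 0 := by
    intro j
    obtain ⟨s, hs, c, hc, hrc⟩ := hdec _ hfy
    refine ⟨c j, hc j, ?_⟩
    have h2 := congrArg Prod.fst hrc
    simp only [Prod.fst_add] at h2
    rw [Prod.fst_sum] at h2
    have hz : ∑ i, (c i).1 = 0 := by omega
    exact (Finset.sum_eq_zero_iff.mp hz) j (Finset.mem_univ j)
  have hg0 : ∀ j : Fin m, coef (g j) (0, 0) = 0 :=
    fun j => coef_nonunit_zero (hirr j).not_isUnit
  -- critical weights of the factors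
  have hcrit : ∀ j : Fin m, ∃ v : ℕ × ℕ, 1 ≤ v.1 ∧ 1 ≤ v.2 ∧ Nat.gcd v.1 v.2 = 1 ∧
      ∃ p ∈ supp (g j), ∃ q ∈ supp (g j),
        (∀ r ∈ supp (g j), Lw v p ≤ Lw v r) ∧ Lw v q = Lw v p ∧ p.1 < q.1 :=
    fun j => exists_crit (hg0 j) (hgx j) (hgy j)
  choose wv hv1 hv2 hgcd P hP Q hQ hPmin hPQval hPQx using hcrit
  -- tops and bottoms of all factors at any weight
  have hTBex : ∀ v : ℕ × ℕ, ∀ j : Fin m, ∃ pq : (ℕ × ℕ) × (ℕ × ℕ),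
      1 ≤ v.1 → (IsTop (g j) v pq.1 ∧ IsBot (g j) v pq.2) := by
    intro v j
    by_cases h : 1 ≤ v.1
    · obtain ⟨T, hT⟩ := exists_isTop ⟨P j, hP j⟩ v h
      obtain ⟨B, hB⟩ := exists_isBot ⟨P j, hP j⟩ v
      exact ⟨(T, B), fun _ => ⟨hT, hB⟩⟩
    · exact ⟨((0, 0), (0, 0)), fun hc => absurd hc h⟩
  choose TB hTB using hTBex
  set ST : ℕ × ℕ → ℕ × ℕ := fun v => ∑ j, (TB v j).1 with hSTdef
  set SB : ℕ × ℕ → ℕ × ℕ := fun v => ∑ j, (TB v j).2 with hSBdef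
  -- tops and bottoms of f itself
  have hTopf : ∀ v : ℕ × ℕ, 1 ≤ v.1 → 1 ≤ v.2 → IsTop f v (ST v) ∧ IsBot f v (SB v) := by
    intro v h1 h2
    have hprodT : IsTop (∏ j, g j) v (ST v) :=
      isTop_prod g v h1 h2 _ (fun j => (hTB v j h1).1) Finset.univ
    have hprodB : IsBot (∏ j, g j) v (SB v) :=
      isBot_prod g v h1 h2 _ (fun j => (hTB v j h1).2) Finset.univ
    have hu := isTop_of_const (coef_unit_ne u) v h1
    have hzadd : ∀ x : ℕ × ℕ, ((0, 0) : ℕ × ℕ) + x = x := by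
      intro x; ext <;> simp
    constructor
    · have h := isTop_mul h2 hu.1 hprodT
      rw [hzadd] at h
      rwa [← hfact] at h
    · have h := isBot_mul h2 hu.2 hprodB
      rw [hzadd] at h
      rwa [← hfact] at h
  -- the per-factor gap at its own critical weight
  have hgap : ∀ j : Fin m, (TB (wv j) j).2.1 + (wv j).2 ≤ (TB (wv j) j).1.1 := by
    intro j
    have hT := (hTB (wv j) j (hv1 j)).1
    have hB := (hTB (wv j) j (hv1 j)).2
    obtain ⟨heq, hx, hy⟩ := bot_le_top (hv2 j) hB hT
    have hvalP : Lw (wv j) (P j) = Lw (wv j) (TB (wv j) j).2 := by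
      have h1 : Lw (wv j) (TB (wv j) j).2 ≤ Lw (wv j) (P j) := hB.2.1 _ (hP j)
      have h2 : Lw (wv j) (P j) ≤ Lw (wv j) (TB (wv j) j).2 := hPmin j _ hB.1
      omega
    have hBP : (TB (wv j) j).2.1 ≤ (P j).1 := hB.2.2 _ (hP j) hvalP
    have hvalQ : Lw (wv j) (Q j) = Lw (wv j) (TB (wv j) j).1 := by
      have h1 : Lw (wv j) (TB (wv j) j).1 ≤ Lw (wv j) (Q j) := hT.2.1 _ (hQ j)
      have h3 : Lw (wv j) (Q j) = Lw (wv j) (P j) := hPQval j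
      omega
    have hQT : (Q j).1 ≤ (TB (wv j) j).1.1 := hT.2.2 _ (hQ j) hvalQ
    have hDx1 : 1 ≤ (TB (wv j) j).1.1 - (TB (wv j) j).2.1 := by
      have := hPQx j; omega
    have hDxy : ((TB (wv j) j).1.1 - (TB (wv j) j).2.1) * (wv j).1
        = ((TB (wv j) j).2.2 - (TB (wv j) j).1.2) * (wv j).2 := by
      simp only [Lw] at heq
      zify [hx, hy]
      linarith [heq]
    have hdvd : (wv j).2 ∣ ((TB (wv j) j).1.1 - (TB (wv j) j).2.1) := by
      have h1 : (wv j).2 ∣ ((TB (wv j) j).1.1 - (TB (wv j) j).2.1) * (wv j).1 :=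
        ⟨((TB (wv j) j).2.2 - (TB (wv j) j).1.2), by rw [hDxy]; ring⟩
      exact (Nat.Coprime.dvd_of_dvd_mul_right (Nat.coprime_comm.mp (hgcd j))) h1
    have := Nat.le_of_dvd (by omega) hdvd
    omega
  -- the counting function
  set k : Fin m → ℕ :=
    fun i => 1 + (Finset.univ.filter (fun j => wv j = wv i ∧ j < i)).card with hkdef
  have hk1 : ∀ i, 1 ≤ k i := fun i => Nat.le_add_right 1 _
  -- the crucial inequality : room for k i segments on the face of f
  have Hk : ∀ i : Fin m, (SB (wv i)).1 + k i * (wv i).2 ≤ (ST (wv i)).1 := by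
    intro i
    set v := wv i with hv
    set S := Finset.univ.filter (fun j => wv j = v) with hSdef
    have hcard : k i ≤ S.card := by
      have hsub : insert i (Finset.univ.filter (fun j => wv j = wv i ∧ j < i)) ⊆ S := by
        intro l hl
        rcases Finset.mem_insert.mp hl with rfl | hl
        · simp [hSdef, hv]
        · simp only [Finset.mem_filter, Finset.mem_univ, true_and] at hl
          simp [hSdef, hl.1, hv]
      have hni : i ∉ Finset.univ.filter (fun j => wv j = wv i ∧ j < i) := by
        simp
      have := Finset.card_le_card hsub
      rw [Finset.card_insert_of_notMem hni] at this
      have hki : k i = 1 + (Finset.univ.filter (fun j => wv j = wv i ∧ j < i)).card := rfl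
      rw [hki]
      have hSS : (Finset.univ.filter (fun j => wv j = wv i)).card = S.card := rfl
      omega
    have hsum : ∑ j, ((TB v j).2.1 + if j ∈ S then v.2 else 0) ≤ ∑ j, (TB v j).1.1 := by
      apply Finset.sum_le_sum
      intro j _
      by_cases hj : j ∈ S
      · rw [if_pos hj]
        simp only [hSdef, Finset.mem_filter, Finset.mem_univ, true_and] at hj
        have := hgap j
        rw [hj] at this
        exact this
      · rw [if_neg hj]
        simp only [Nat.add_zero]
        exact (bot_le_top (hv2 i) (hTB v j (hv1 i)).2 (hTB v j (hv1 i)).1).2.1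
    rw [Finset.sum_add_distrib] at hsum
    have hite : ∑ j, (if j ∈ S then v.2 else 0) = S.card * v.2 := by
      rw [Finset.sum_ite_mem, Finset.univ_inter, Finset.sum_const, smul_eq_mul]
    rw [hite] at hsum
    have hST1 : (ST v).1 = ∑ j, (TB v j).1.1 := by
      rw [hSTdef]; exact Prod.fst_sum
    have hSB1 : (SB v).1 = ∑ j, (TB v j).2.1 := by
      rw [hSBdef]; exact Prod.fst_sum
    rw [hST1, hSB1]
    have : k i * v.2 ≤ S.card * v.2 := Nat.mul_le_mul_right _ hcard
    omega
  -- the lattice points on the Newton polygon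
  have hseg : ∀ i : Fin m,
      k i * (wv i).1 ≤ (SB (wv i)).2 ∧
      ((((SB (wv i)).1 + k i * (wv i).2 : ℕ) : ℝ),
        (((SB (wv i)).2 - k i * (wv i).1 : ℕ) : ℝ)) ∈ newtonPolygon f := by
    intro i
    exact mem_polygon_segment (hv1 i) (hv2 i) (hTopf (wv i) (hv1 i) (hv2 i)).2
      (hTopf (wv i) (hv1 i) (hv2 i)).1 (k i) (Hk i)
  -- the extra point : bottom vertex at the steepest chosen weight
  obtain ⟨i0, -, hi0⟩ := Finset.exists_max_image Finset.univ
    (fun i => ((wv i).1 : ℚ) / ((wv i).2 : ℚ)) ⟨⟨0, hm⟩, Finset.mem_univ _⟩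
  have hE : ((((SB (wv i0)).1 : ℕ) : ℝ), (((SB (wv i0)).2 : ℕ) : ℝ)) ∈ newtonPolygon f := by
    have hb := (hTopf (wv i0) (hv1 i0) (hv2 i0)).2
    exact mem_polygon_of_min (hv1 i0) (hv2 i0) hb.1 hb.2.1
  -- cross monotonicity between different weights
  have hmono : ∀ i j : Fin m, (wv i).1 * (wv j).2 < (wv j).1 * (wv i).2 →
      (ST (wv j)).1 ≤ (SB (wv i)).1 := by
    intro i j hcr
    have hbi := (hTopf (wv i) (hv1 i) (hv2 i)).2
    have htj := (hTopf (wv j) (hv1 j) (hv2 j)).1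
    exact cross_mono hbi.1 htj.1 hbi.2.1 htj.2.1 hcr
  -- slopes : equal weight or strict cross inequality
  have htri : ∀ i j : Fin m, wv i ≠ wv j →
      (wv i).1 * (wv j).2 < (wv j).1 * (wv i).2 ∨
      (wv j).1 * (wv i).2 < (wv i).1 * (wv j).2 := by
    intro i j hne
    rcases Nat.lt_trichotomy ((wv i).1 * (wv j).2) ((wv j).1 * (wv i).2) with h | h | h
    · exact Or.inl h
    · exact absurd (prim_eq (hv1 i) (hv2 i) (hv1 j) (hv2 j) (hgcd i) (hgcd j) h) hne
    · exact Or.inr h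
  -- x-coordinates
  set xn : Fin m → ℕ := fun i => (SB (wv i)).1 + k i * (wv i).2 with hxndef
  -- monotonicity of k within a weight class
  have hkmono : ∀ i j : Fin m, i < j → wv i = wv j → k i < k j := by
    intro i j hij hww
    have hsub : insert i (Finset.univ.filter (fun l => wv l = wv i ∧ l < i)) ⊆
        Finset.univ.filter (fun l => wv l = wv j ∧ l < j) := by
      intro l hl
      rcases Finset.mem_insert.mp hl with rfl | hl
      · simp only [Finset.mem_filter, Finset.mem_univ, true_and]
        exact ⟨hww, hij⟩
      · simp only [Finset.mem_filter, Finset.mem_univ, true_and] at hl ⊢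
        exact ⟨hl.1.trans hww, hl.2.trans hij⟩
    have hni : i ∉ Finset.univ.filter (fun l => wv l = wv i ∧ l < i) := by simp
    have := Finset.card_le_card hsub
    rw [Finset.card_insert_of_notMem hni] at this
    have hki : k i = 1 + (Finset.univ.filter (fun l => wv l = wv i ∧ l < i)).card := rfl
    have hkj : k j = 1 + (Finset.univ.filter (fun l => wv l = wv j ∧ l < j)).card := rfl
    omega
  -- distinctness of the x-coordinates among the m points
  have hxdist : ∀ i j : Fin m, i ≠ j → xn i ≠ xn j := by
    have hcase : ∀ i j : Fin m, (wv i).1 * (wv j).2 < (wv j).1 * (wv i).2 →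
        xn j < xn i := by
      intro i j hcr
      have h1 : xn j ≤ (ST (wv j)).1 := Hk j
      have h2 := hmono i j hcr
      have h3 : (SB (wv i)).1 < xn i := by
        have := hk1 i
        have := hv2 i
        have : 1 ≤ k i * (wv i).2 := Nat.one_le_iff_ne_zero.mpr (by positivity)
        simp only [hxndef]; omega
      omega
    intro i j hne
    by_cases hww : wv i = wv j
    · rcases Ne.lt_or_gt hne with h | h
      · have hk := hkmono i j h hww
        simp only [hxndef, hww]
        have := hv2 j
        intro hcon
        have : k i * (wv j).2 = k j * (wv j).2 := by omega
        have : k i = k j := Nat.eq_of_mul_eq_mul_right (by omega) this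
        omega
      · have hk := hkmono j i h hww.symm
        simp only [hxndef, hww]
        have := hv2 j
        intro hcon
        have : k i * (wv j).2 = k j * (wv j).2 := by omega
        have : k i = k j := Nat.eq_of_mul_eq_mul_right (by omega) this
        omega
    · rcases htri i j hww with h | h
      · exact (hcase i j h).ne'
      · exact (hcase j i h).ne
  -- the extra point has x-coordinate smaller than all the others
  have hxE : ∀ i : Fin m, (SB (wv i0)).1 < xn i := by
    intro i
    by_cases hww : wv i = wv i0
    · have : (SB (wv i0)).1 = (SB (wv i)).1 := by rw [hww]
      rw [this]
      have := hv2 i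
      have h1 : 1 ≤ k i * (wv i).2 := Nat.one_le_iff_ne_zero.mpr (by positivity)
      simp only [hxndef]; omega
    · have hlt : (wv i).1 * (wv i0).2 < (wv i0).1 * (wv i).2 := by
        rcases htri i i0 hww with h | h
        · exact h
        · exfalso
          have hs := hi0 i (Finset.mem_univ i)
          rw [div_le_div_iff₀ (by exact_mod_cast hv2 i) (by exact_mod_cast hv2 i0)] at hs
          have : ((wv i).1 : ℚ) * (wv i0).2 ≤ ((wv i0).1 : ℚ) * (wv i).2 := hs
          have hle : (wv i).1 * (wv i0).2 ≤ (wv i0).1 * (wv i).2 := by exact_mod_cast this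
          omega
      have h2 := hmono i i0 hlt
      have hbt := bot_le_top (hv2 i0) (hTopf (wv i0) (hv1 i0) (hv2 i0)).2
        (hTopf (wv i0) (hv1 i0) (hv2 i0)).1
      have h3 : (SB (wv i)).1 < xn i := by
        have := hv2 i
        have : 1 ≤ k i * (wv i).2 := Nat.one_le_iff_ne_zero.mpr (by positivity)
        simp only [hxndef]; omega
      omega
  -- the injection into the lattice points of the polygon
  set Spoly : Set (ℤ × ℤ) := {p : ℤ × ℤ | ((p.1 : ℝ), (p.2 : ℝ)) ∈ newtonPolygon f}
    with hSpoly
  have hfin : Spoly.Finite := polygon_finite hfx hfy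
  haveI hfinsub : Finite {p : ℤ × ℤ // ((p.1 : ℝ), (p.2 : ℝ)) ∈ newtonPolygon f} :=
    hfin.to_subtype
  have hptmem : ∀ i : Fin m,
      (((xn i : ℤ), (((SB (wv i)).2 - k i * (wv i).1 : ℕ) : ℤ)) : ℤ × ℤ) ∈ Spoly := by
    intro i
    have := (hseg i).2
    simp only [hSpoly, Set.mem_setOf_eq]
    push_cast
    convert this using 2 <;> push_cast <;> ring
  have hEmem : ((((SB (wv i0)).1 : ℤ), ((SB (wv i0)).2 : ℤ)) : ℤ × ℤ) ∈ Spoly := by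
    simp only [hSpoly, Set.mem_setOf_eq]
    push_cast
    exact hE
  set F : Fin (m + 1) → {p : ℤ × ℤ // ((p.1 : ℝ), (p.2 : ℝ)) ∈ newtonPolygon f} :=
    fun i => if h : (i : ℕ) < m
      then ⟨((xn ⟨i, h⟩ : ℤ), (((SB (wv ⟨i, h⟩)).2 - k ⟨i, h⟩ * (wv ⟨i, h⟩).1 : ℕ) : ℤ)),
        hptmem ⟨i, h⟩⟩
      else ⟨(((SB (wv i0)).1 : ℤ), ((SB (wv i0)).2 : ℤ)), hEmem⟩
    with hFdef
  have hFinj : Function.Injective F := by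
    intro i j hij
    have hx' := congrArg (fun z => z.val.1) hij
    simp only [hFdef] at hx'
    by_cases hi : (i : ℕ) < m <;> by_cases hj : (j : ℕ) < m
    · rw [dif_pos hi, dif_pos hj] at hx'
      simp only at hx'
      have : xn ⟨i, hi⟩ = xn ⟨j, hj⟩ := by exact_mod_cast hx'
      have heq : (⟨i, hi⟩ : Fin m) = ⟨j, hj⟩ := by
        by_contra hcon
        exact hxdist _ _ hcon this
      have : (i : ℕ) = (j : ℕ) := by
        have := congrArg Fin.val heq
        simpa using this
      exact Fin.ext this
    · rw [dif_pos hi, dif_neg hj] at hx'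
      simp only at hx'
      exfalso
      have : xn ⟨i, hi⟩ = (SB (wv i0)).1 := by exact_mod_cast hx'
      have := hxE ⟨i, hi⟩
      omega
    · rw [dif_neg hi, dif_pos hj] at hx'
      simp only at hx'
      exfalso
      have : (SB (wv i0)).1 = xn ⟨j, hj⟩ := by exact_mod_cast hx'
      have := hxE ⟨j, hj⟩
      omega
    · have : (i : ℕ) = m := by omega
      have hj' : (j : ℕ) = m := by omega
      apply Fin.ext
      omega
  have hcard : m + 1 ≤ Nat.card {p : ℤ × ℤ // ((p.1 : ℝ), (p.2 : ℝ)) ∈ newtonPolygon f} := by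
    have h := Nat.card_le_card_of_injective F hFinj
    simpa using h
  rw [rNewton]
  omega

end
end
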